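/- arXiv:2511.21099 — 5 statements merged into one kernel-verified Lean document; each statement's English description precedes it below -/
import Mathlib

section
/- Let y be a fractional allocation of the items M to the agents N whose allocation graph G_y is acyclic, and suppose every agent i has an additive valuation v_i : 2^M → ℝ≥0. Then there exists an integral allocation (A_1,…,A_n), with A_i ⊆ { j : y_{i,j} > 0 } for each agent i, such that for every agent i, v_i(A_i) ≥ Σ_{j∈M} v_i({j}) y_{i,j} − α_i, where α_i = max_{j : y_{i,j} > 0} v_i({j}). -/
open Finset

/-- A fractional allocation: entries in `[0,1]`, each item fully allocated. -/
def IsFracAlloc {N M : Type*} [Fintype N] (x : N → M → ℝ) : Prop :=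
  (∀ i j, 0 ≤ x i j ∧ x i j ≤ 1) ∧ ∀ j, ∑ i, x i j = 1

/-- The bipartite allocation graph on `N ⊕ M`: agent `i` is adjacent to item `j`
iff `x i j > 0`. -/
def allocGraph {N M : Type*} (x : N → M → ℝ) : SimpleGraph (N ⊕ M) where
  Adj a b :=
    (∃ i j, a = Sum.inl i ∧ b = Sum.inr j ∧ 0 < x i j) ∨
    (∃ i j, a = Sum.inr j ∧ b = Sum.inl i ∧ 0 < x i j)
  symm := by
    constructor
    rintro a b (⟨i, j, rfl, rfl, h⟩ | ⟨i, j, rfl, rfl, h⟩)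
    · exact Or.inr ⟨i, j, rfl, rfl, h⟩
    · exact Or.inl ⟨i, j, rfl, rfl, h⟩
  loopless := by
    constructor
    rintro a (⟨i, j, rfl, h, -⟩ | ⟨i, j, rfl, h, -⟩) <;> simp at h

/-- An additive valuation. -/
def IsAdditive {M : Type*} (v : Finset M → NNReal) : Prop :=
  ∀ S : Finset M, v S = ∑ j ∈ S, v {j}

/-- A monotone valuation. -/
def IsMonotoneVal {M : Type*} (v : Finset M → NNReal) : Prop :=
  ∀ A B : Finset M, A ⊆ B → v A ≤ v B

/-- A submodular valuation. -/
def IsSubmodular {M : Type*} [DecidableEq M] (v : Finset M → NNReal) : Prop :=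
  ∀ A B : Finset M, v (A ∪ B) + v (A ∩ B) ≤ v A + v B

/-- A normalized valuation. -/
def IsNormalized {M : Type*} (v : Finset M → NNReal) : Prop := v ∅ = 0

/-- The multilinear extension of a set function. -/
noncomputable def mlExt {M : Type*} [Fintype M] [DecidableEq M]
    (v : Finset M → NNReal) (y : M → ℝ) : ℝ :=
  ∑ S : Finset M, (v S : ℝ) * ((∏ j ∈ S, y j) * ∏ j ∈ Sᶜ, (1 - y j))

/-- `max_{j : row j > 0} v {j}` (0 if the support is empty). -/
noncomputable def maxOnSupport {M : Type*} [Fintype M]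
    (v : Finset M → NNReal) (row : M → ℝ) : NNReal :=
  (Finset.univ.filter fun j => 0 < row j).sup fun j => v {j}

/-- An integral allocation: a partition of the items among the agents. -/
def IsPartition {N M : Type*} (A : N → Finset M) : Prop := ∀ j : M, ∃! i : N, j ∈ A i

/-- The concave closure `f⁺` of a set function. -/
noncomputable def concaveClosure {M : Type*} [Fintype M] [DecidableEq M]
    (v : Finset M → NNReal) (y : M → ℝ) : ℝ :=
  sSup {r : ℝ | ∃ lam : Finset M → ℝ, (∀ S, 0 ≤ lam S) ∧ (∑ S : Finset M, lam S = 1) ∧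
    (∀ j : M, (∑ S : Finset M, lam S * (if j ∈ S then 1 else 0)) = y j) ∧
    r = ∑ S : Finset M, lam S * (v S : ℝ)}

/-- The maximin-share value of `v` over `n` parts. -/
noncomputable def mmsValue {M : Type*} (n : ℕ) (v : Finset M → NNReal) : ℝ :=
  sSup {r : ℝ | ∃ P : Fin n → Finset M, (∀ j : M, ∃! k, j ∈ P k) ∧ r = ⨅ k, (v (P k) : ℝ)}

/-!
Root every component of the forest `G_y` and give each item to its parent when that is an agent,
and otherwise to any agent holding a share of it. Agent `i` then keeps every item of its support
except possibly its own parent, so it loses at most one term `v_i({j}) y_{i,j} ≤ α_i`, while on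
the items it keeps `y_{i,j} ≤ 1`.
-/

namespace SimpleGraph

variable {V : Type*} {G : SimpleGraph V}

lemma IsAcyclic.mem_support_or_mem_support_of_adj (hG : G.IsAcyclic) {a b r : V}
    {p : G.Walk a r} {q : G.Walk b r} (hp : p.IsPath) (hq : q.IsPath) (hab : G.Adj a b) :
    b ∈ p.support ∨ a ∈ q.support := by
  refine or_iff_not_imp_right.2 fun ha => ?_
  simpa using hG.mem_support_of_ne_mem_support_of_adj_of_isPath hp.reverse hq.reverse hab
    (by simpa using ha)

theorem IsAcyclic.exists_parent (hG : G.IsAcyclic) :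
    ∃ par : V → V, (∀ a, par a = a ∨ G.Adj a (par a)) ∧
      ∀ ⦃a b⦄, G.Adj a b → par a = b ∨ par b = a := by
  classical
  let root : V → V := fun a => (G.connectedComponentMk a).out
  have hroot_adj : ∀ ⦃a b⦄, G.Adj a b → root a = root b := fun a b hab =>
    congrArg Quot.out (ConnectedComponent.connectedComponentMk_eq_of_adj hab)
  let path : ∀ a, G.Path a (root a) := fun a =>
    (ConnectedComponent.exact (G.connectedComponentMk a).out_eq).symm.some.toPath
  refine ⟨fun a => (path a : G.Walk a (root a)).snd, fun a => ?_, fun a b hab => ?_⟩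
  · by_cases hnil : (path a : G.Walk a (root a)).Nil
    · left
      show (path a : G.Walk a (root a)).getVert 1 = a
      rw [Walk.getVert_of_length_le _ (by simp [Walk.length_eq_zero_iff.mpr hnil])]
      exact hnil.eq.symm
    · exact Or.inr ((path a : G.Walk a (root a)).adj_snd hnil)
  · have hq := (path b).2
    rw [← Walk.isPath_copy _ rfl (hroot_adj hab).symm] at hq
    rcases hG.mem_support_or_mem_support_of_adj (path a).2 hq hab with h | h
    · exact Or.inl (hG.eq_snd_of_adj_start (path a).2 hab h).symm
    · exact Or.inr (hG.eq_snd_of_adj_start (path b).2 hab.symm (by simpa using h)).symm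

end SimpleGraph

section Allocation

variable {N M : Type*}

lemma allocGraph_adj_inl_inr {x : N → M → ℝ} {i : N} {j : M} :
    (allocGraph x).Adj (.inl i) (.inr j) ↔ 0 < x i j := by
  simp [allocGraph]

lemma IsFracAlloc.exists_pos [Fintype N] {y : N → M → ℝ} (hy : IsFracAlloc y) (j : M) :
    ∃ i, 0 < y i j := by
  simpa using exists_lt_of_sum_lt (s := univ) (f := 0) (g := (y · j)) (by simp [hy.2 j])

theorem IsFracAlloc.exists_rounding_of_isAcyclic [Fintype N] {y : N → M → ℝ}
    (hy : IsFracAlloc y) (hac : (allocGraph y).IsAcyclic) :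
    ∃ f : M → N, (∀ j, 0 < y (f j) j) ∧ ∀ i, {j | 0 < y i j ∧ f j ≠ i}.Subsingleton := by
  obtain ⟨par, hpar_adj, hpar_edge⟩ := hac.exists_parent
  choose owner howner using hy.exists_pos
  let f : M → N := fun j => Sum.elim id (fun _ => owner j) (par (.inr j))
  have hf : ∀ i j, par (.inr j) = .inl i → f j = i := fun i j h => by simp [f, h]
  have hpar_inl : ∀ i j, 0 < y i j → f j ≠ i → par (.inl i) = .inr j := fun i j hij hne =>
    (hpar_edge (allocGraph_adj_inl_inr.2 hij)).resolve_right fun h => hne (hf i j h)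
  refine ⟨f, fun j => ?_, fun i j hj j' hj' => ?_⟩
  · rcases h : par (.inr j) with i | j'
    · rw [hf i j h, ← allocGraph_adj_inl_inr]
      have hadj := (hpar_adj (.inr j)).resolve_left (by simp [h])
      rw [h] at hadj
      exact hadj.symm
    · simp [f, h, howner]
  · exact Sum.inr_injective ((hpar_inl i j hj.1 hj.2).symm.trans (hpar_inl i j' hj'.1 hj'.2))

lemma IsAdditive.sum_mul_sub_maxOnSupport_le [Fintype M] {v : Finset M → NNReal}
    (hv : IsAdditive v) {row : M → ℝ} (hrow : ∀ j, 0 ≤ row j ∧ row j ≤ 1) {A : Finset M}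
    (hlost : {j | 0 < row j ∧ j ∉ A}.Subsingleton) :
    ∑ j, (v {j} : ℝ) * row j - maxOnSupport v row ≤ v A := by
  classical
  have hterm : ∀ j, (v {j} : ℝ) * row j ≤ v {j} := fun j =>
    mul_le_of_le_one_right (v {j}).coe_nonneg (hrow j).2
  have hin : ∑ j ∈ A, (v {j} : ℝ) * row j ≤ v A := by
    rw [hv A, NNReal.coe_sum]
    exact sum_le_sum fun j _ => hterm j
  have hout : ∑ j ∈ Aᶜ, (v {j} : ℝ) * row j ≤ maxOnSupport v row := by
    rw [← sum_filter_of_ne (p := fun j => 0 < row j) fun j _ hj =>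
      (hrow j).1.lt_of_ne' fun h => hj (by simp [h])]
    have hcard : (Aᶜ.filter fun j => 0 < row j).card ≤ 1 :=
      card_le_one.2 fun j hj j' hj' =>
        hlost (by simpa [and_comm] using hj) (by simpa [and_comm] using hj')
    calc ∑ j ∈ Aᶜ.filter (fun j => 0 < row j), (v {j} : ℝ) * row j
        ≤ (Aᶜ.filter fun j => 0 < row j).card • (maxOnSupport v row : ℝ) :=
          sum_le_card_nsmul _ _ _ fun j hj => (hterm j).trans <| NNReal.coe_le_coe.2 <|
            le_sup (f := fun j => v {j}) (by simpa using (mem_filter.1 hj).2)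
      _ ≤ maxOnSupport v row := by
          rw [nsmul_eq_mul]
          exact mul_le_of_le_one_left (maxOnSupport v row).coe_nonneg (by exact_mod_cast hcard)
  linarith [sum_add_sum_compl A fun j => (v {j} : ℝ) * row j]

end Allocation

theorem stmt1_general {N M : Type*} [Fintype N] [Fintype M]
    (v : N → Finset M → NNReal) (hv : ∀ i, IsAdditive (v i))
    (y : N → M → ℝ) (hy : IsFracAlloc y) (hac : (allocGraph y).IsAcyclic) :
    ∃ A : N → Finset M, IsPartition A ∧
      (∀ i j, j ∈ A i → 0 < y i j) ∧
      ∀ i, (∑ j, (v i {j} : ℝ) * y i j) - (maxOnSupport (v i) (y i) : ℝ) ≤ (v i (A i) : ℝ) := by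
  classical
  obtain ⟨f, hf_pos, hf_lost⟩ := hy.exists_rounding_of_isAcyclic hac
  refine ⟨fun i => univ.filter (f · = i), fun j => ⟨f j, by simp, fun i hi => ?_⟩,
    fun i j hj => ?_, fun i => (hv i).sum_mul_sub_maxOnSupport_le (hy.1 i) ?_⟩
  · exact (mem_filter.1 hi).2.symm
  · rw [← (mem_filter.1 hj).2]
    exact hf_pos j
  · simpa using hf_lost i

/-- rounding an acyclic fractional allocation, additive valuations. -/
theorem stmt1 {N M : Type*} [Fintype N] [Fintype M] [DecidableEq M]
    (v : N → Finset M → NNReal) (hv : ∀ i, IsAdditive (v i))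
    (y : N → M → ℝ) (hy : IsFracAlloc y) (hac : (allocGraph y).IsAcyclic) :
    ∃ A : N → Finset M, IsPartition A ∧
      (∀ i j, j ∈ A i → 0 < y i j) ∧
      ∀ i, (∑ j, (v i {j} : ℝ) * y i j) - (maxOnSupport (v i) (y i) : ℝ) ≤ (v i (A i) : ℝ) :=
  stmt1_general v hv y hy hac
end

section
/- Let x be a fractional allocation of the items M to the agents N, suppose every agent i has an additive valuation v_i : 2^M → ℝ≥0, and let ε ∈ (0,1) satisfy max_{j : x_{i,j} > 0} v_i({j}) ≤ ε · Σ_{j∈M} v_i({j}) x_{i,j} for every agent i. Then there exists an integral allocation (Z_1,…,Z_n) such that for every agent i, v_i(Z_i) ≥ (1 − ε) · Σ_{j∈M} v_i({j}) x_{i,j}. -/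
open Finset

/-!
Round `x` step by step, each step strictly shrinking its support, without ever decreasing, for any
agent `i`, the quantity `∑ j, v i {j} * x i j - max {v i {j} | 0 < x i j < 1}`. Once `x` is
integral this quantity is the value of `i`'s bundle, and the smallness hypothesis bounds the
subtracted maximum of the original `x` by `ε` times its fractional value.

If some agent holds exactly one fractional item, hand its share to another agent holding part of
that item: the agent loses at most that item's value, and it holds no fractional item afterwards.
Otherwise every fractional item and every agent holding one lies on at least two fractional
entries, so there are at least as many fractional entries as fractional items and such agents
together. Hence the homogeneous system "conserve every fractional item and the value of every
such agent but one" has a nonzero solution, supported on the fractional entries; with its sign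
chosen so that the remaining agent gains, follow it until an entry vanishes.
-/

open scoped NNReal

theorem exists_ne_zero_sum_mul_eq_zero_of_card_lt {K ι κ : Type*} [Field K] [Fintype ι]
    (E : Finset ι) (C : Finset κ) (a : κ → ι → K) (h : #C < #E) :
    ∃ d : ι → K, d ≠ 0 ∧ (∀ e ∉ E, d e = 0) ∧ ∀ c ∈ C, ∑ e, a c e * d e = 0 := by
  classical
  let B : Matrix C E K := fun c e => a c e
  have hker : LinearMap.ker B.mulVecLin ≠ ⊥ :=
    LinearMap.ker_ne_bot_of_finrank_lt (by simpa using h)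
  obtain ⟨v, hvker, hv0⟩ := (Submodule.ne_bot_iff _).1 hker
  have hv : B.mulVec v = 0 := hvker
  refine ⟨fun e => if he : e ∈ E then v ⟨e, he⟩ else 0, fun hd => hv0 ?_, fun e he => dif_neg he,
    fun c hc => ?_⟩
  · ext ⟨e, he⟩
    simpa [he] using congrFun hd e
  · rw [← sum_subset (subset_univ E) fun e _ he => by simp [he], ← sum_coe_sort E]
    simpa [B, Matrix.mulVec, dotProduct] using congrFun hv ⟨c, hc⟩

theorem exists_max_step {ι : Type*} [Fintype ι] (x d : ι → ℝ) (hx : ∀ e, 0 ≤ x e)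
    (hd : ∀ e, d e < 0 → 0 < x e) (hneg : ∃ e, d e < 0) :
    ∃ c > 0, (∀ e, 0 ≤ x e + c * d e) ∧ ∃ e, d e < 0 ∧ x e + c * d e = 0 := by
  classical
  obtain ⟨e₀, he₀, hmin⟩ :=
    (univ.filter (d · < 0)).exists_min_image (fun e => x e / -d e)
      (let ⟨e, he⟩ := hneg; ⟨e, by simpa using he⟩)
  rw [mem_filter] at he₀
  have hc : 0 < x e₀ / -d e₀ := div_pos (hd e₀ he₀.2) (neg_pos.2 he₀.2)
  have hzero : x e₀ + x e₀ / -d e₀ * d e₀ = 0 := by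
    rw [div_neg, neg_mul, div_mul_cancel₀ _ he₀.2.ne, add_neg_cancel]
  refine ⟨x e₀ / -d e₀, hc, fun e => ?_, e₀, he₀.2, hzero⟩
  rcases lt_or_ge (d e) 0 with he | he
  · have := hmin e (by simpa using he)
    rw [le_div_iff₀ (neg_pos.2 he)] at this
    linarith
  · exact add_nonneg (hx e) (mul_nonneg hc.le he)

namespace IsFracAlloc

variable {N M : Type*} [Fintype N] {x : N → M → ℝ}

theorem of_nonneg (h0 : ∀ i j, 0 ≤ x i j) (h1 : ∀ j, ∑ i, x i j = 1) : IsFracAlloc x :=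
  ⟨fun i j => ⟨h0 i j, h1 j ▸ single_le_sum (fun k _ => h0 k j) (mem_univ i)⟩, h1⟩

theorem add_le_one (hx : IsFracAlloc x) {i i' : N} (hne : i ≠ i') (j : M) :
    x i j + x i' j ≤ 1 := by
  classical
  rw [← hx.2 j, ← sum_pair (f := fun k => x k j) hne]
  exact sum_le_sum_of_subset_of_nonneg (subset_univ _) fun k _ _ => (hx.1 k j).1

theorem exists_ne_pos_of_lt_one (hx : IsFracAlloc x) {i : N} {j : M} (h : x i j < 1) :
    ∃ i' ≠ i, 0 < x i' j := by
  classical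
  have hrest : ∑ _k ∈ univ.erase i, (0 : ℝ) < ∑ k ∈ univ.erase i, x k j := by
    have := add_sum_erase univ (fun k => x k j) (mem_univ i)
    rw [hx.2 j] at this
    simp only [sum_const_zero]
    linarith
  obtain ⟨k, hk, hpos⟩ := exists_lt_of_sum_lt hrest
  exact ⟨k, ne_of_mem_erase hk, hpos⟩

theorem exists_partition_of_integral [Fintype M] (hx : IsFracAlloc x)
    (hint : ∀ i j, ¬(0 < x i j ∧ x i j < 1)) (w : N → M → ℝ) :
    ∃ Z : N → Finset M, IsPartition Z ∧ ∀ i, ∑ j, w i j * x i j = ∑ j ∈ Z i, w i j := by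
  classical
  have h01 : ∀ i j, x i j = 0 ∨ x i j = 1 := fun i j => by
    by_contra! h
    exact hint i j ⟨lt_of_le_of_ne' (hx.1 i j).1 h.1, lt_of_le_of_ne (hx.1 i j).2 h.2⟩
  refine ⟨fun i => univ.filter (x i · = 1), fun j => ?_, fun i => ?_⟩
  · obtain ⟨i, hi⟩ : ∃ i, x i j = 1 := by
      by_contra! h
      have := hx.2 j
      rw [sum_eq_zero fun i _ => (h01 i j).resolve_right (h i)] at this
      exact zero_ne_one this
    refine ⟨i, by simpa using hi, fun k hk => ?_⟩
    by_contra hne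
    have := hx.add_le_one hne j
    simp only [mem_filter, mem_univ, true_and] at hk
    linarith
  · rw [sum_filter]
    refine sum_congr rfl fun j _ => ?_
    rcases h01 i j with h | h <;> simp [h]

end IsFracAlloc

namespace FracAlloc

section Transfer

variable {N M : Type*} [DecidableEq N] [DecidableEq M] {i i' a : N} {j b : M}

def transferDir (i i' : N) (j : M) : N → M → ℝ := fun a b =>
  if b = j then (if a = i' then 1 else 0) - (if a = i then 1 else 0) else 0

theorem transferDir_apply_self (hi' : i' ≠ i) (b : M) :
    transferDir i i' j i b = if b = j then -1 else 0 := by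
  simp [transferDir, hi'.symm]

theorem transferDir_nonneg (h : ¬(a = i ∧ b = j)) : 0 ≤ transferDir i i' j a b := by
  by_cases hb : b = j
  · simp only [transferDir, hb, ↓reduceIte, show a ≠ i by tauto, sub_zero]
    split_ifs <;> norm_num
  · simp [transferDir, hb]

end Transfer

section Items

variable {N M : Type*} [Fintype M]

noncomputable def fracSupport (x : N → M → ℝ) (i : N) : Finset M :=
  univ.filter fun j => 0 < x i j ∧ x i j < 1

noncomputable def fracMax (w : N → M → ℝ≥0) (x : N → M → ℝ) (i : N) : ℝ≥0 :=
  (fracSupport x i).sup (w i)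

noncomputable def guaranteedValue (w : N → M → ℝ≥0) (x : N → M → ℝ) (i : N) : ℝ :=
  ∑ j, (w i j : ℝ) * x i j - fracMax w x i

variable {w : N → M → ℝ≥0} {x x' : N → M → ℝ}

@[simp] theorem mem_fracSupport {i : N} {j : M} :
    j ∈ fracSupport x i ↔ 0 < x i j ∧ x i j < 1 := by
  simp [fracSupport]

theorem guaranteedValue_le_guaranteedValue {i : N}
    (hval : ∑ j, (w i j : ℝ) * x i j ≤ ∑ j, (w i j : ℝ) * x' i j)
    (hsupp : fracSupport x' i ⊆ fracSupport x i) :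
    guaranteedValue w x i ≤ guaranteedValue w x' i := by
  have : (fracMax w x' i : ℝ) ≤ fracMax w x i := NNReal.coe_le_coe.2 (sup_mono hsupp)
  unfold guaranteedValue
  linarith

end Items

section Agents

variable {N M : Type*} [Fintype N]

def IsFeasibleDirection (x d : N → M → ℝ) : Prop :=
  (∀ i j, d i j ≠ 0 → 0 < x i j ∧ x i j < 1) ∧ ∀ j, ∑ i, d i j = 0

variable {x d : N → M → ℝ}

theorem IsFeasibleDirection.neg (hd : IsFeasibleDirection x d) : IsFeasibleDirection x (-d) :=
  ⟨fun i j h => hd.1 i j (by simpa using h), fun j => by simp [hd.2 j]⟩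

theorem IsFeasibleDirection.exists_neg (hd : IsFeasibleDirection x d) (hne : d ≠ 0) :
    ∃ i j, d i j < 0 := by
  obtain ⟨i, j, hij⟩ : ∃ i j, d i j ≠ 0 := by
    by_contra! h
    exact hne (funext fun i => funext (h i))
  by_contra! hnn
  exact hij ((sum_eq_zero_iff_of_nonneg fun k _ => hnn k j).1 (hd.2 j) i (mem_univ i))

theorem IsFeasibleDirection.isFracAlloc_add (hd : IsFeasibleDirection x d) (hx : IsFracAlloc x)
    {c : ℝ} (hnn : ∀ i j, 0 ≤ x i j + c * d i j) : IsFracAlloc fun i j => x i j + c * d i j :=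
  .of_nonneg hnn fun j => by rw [sum_add_distrib, ← mul_sum, hd.2 j, hx.2 j, mul_zero, add_zero]

theorem isFeasibleDirection_transferDir [DecidableEq N] [DecidableEq M] {i i' : N} {j : M}
    (hx : IsFracAlloc x) (hij : 0 < x i j ∧ x i j < 1) (hi' : i' ≠ i) (hpos' : 0 < x i' j) :
    IsFeasibleDirection x (transferDir i i' j) := by
  refine ⟨fun a b hab => ?_, fun b => ?_⟩
  · by_cases hb : b = j
    · subst hb
      by_cases ha : a = i'
      · exact ⟨ha ▸ hpos', by linarith [ha ▸ hx.add_le_one hi' b]⟩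
      · by_cases ha' : a = i
        · exact ha' ▸ hij
        · simp [transferDir, ha, ha'] at hab
    · simp [transferDir, hb] at hab
  · by_cases hb : b = j <;> simp [transferDir, hb, sum_sub_distrib]

end Agents

variable {N M : Type*} [Fintype N] [Fintype M]

noncomputable def posSupport (x : N → M → ℝ) : Finset (N × M) :=
  univ.filter fun e => 0 < x e.1 e.2

noncomputable def fracEdges (x : N → M → ℝ) : Finset (N × M) :=
  univ.filter fun e => 0 < x e.1 e.2 ∧ x e.1 e.2 < 1

def IsRoundingStep (w : N → M → ℝ≥0) (x x' : N → M → ℝ) : Prop :=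
  IsFracAlloc x' ∧ posSupport x' ⊂ posSupport x ∧
    ∀ i, guaranteedValue w x i ≤ guaranteedValue w x' i

variable {w : N → M → ℝ≥0} {x d : N → M → ℝ}

@[simp] theorem mem_posSupport {e : N × M} : e ∈ posSupport x ↔ 0 < x e.1 e.2 := by
  simp [posSupport]

@[simp] theorem mem_fracEdges {e : N × M} :
    e ∈ fracEdges x ↔ 0 < x e.1 e.2 ∧ x e.1 e.2 < 1 := by
  simp [fracEdges]

namespace IsFeasibleDirection

theorem fracSupport_add_subset (hd : IsFeasibleDirection x d) (c : ℝ) (i : N) :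
    fracSupport (fun i j => x i j + c * d i j) i ⊆ fracSupport x i := by
  intro j hj
  rw [mem_fracSupport] at hj ⊢
  by_cases hdij : d i j = 0
  · simpa [hdij] using hj
  · exact hd.1 i j hdij

theorem posSupport_add_ssubset (hd : IsFeasibleDirection x d) {c : ℝ} {i : N} {j : M}
    (hdij : d i j ≠ 0) (hzero : x i j + c * d i j = 0) :
    posSupport (fun i j => x i j + c * d i j) ⊂ posSupport x := by
  refine (ssubset_iff_of_subset fun e he => ?_).2 ⟨(i, j), ?_, ?_⟩
  · rw [mem_posSupport] at he ⊢
    by_cases hde : d e.1 e.2 = 0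
    · simpa [hde] using he
    · exact (hd.1 _ _ hde).1
  · simpa using (hd.1 i j hdij).1
  · simp [hzero]

theorem guaranteedValue_le (hd : IsFeasibleDirection x d) {c : ℝ} (hc : 0 ≤ c) {i : N}
    (hgain : 0 ≤ ∑ j, (w i j : ℝ) * d i j) :
    guaranteedValue w x i ≤ guaranteedValue w (fun i j => x i j + c * d i j) i := by
  refine guaranteedValue_le_guaranteedValue ?_ (hd.fracSupport_add_subset c i)
  have : ∑ j, (w i j : ℝ) * (x i j + c * d i j) =
      ∑ j, (w i j : ℝ) * x i j + c * ∑ j, (w i j : ℝ) * d i j := by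
    simp only [mul_add, sum_add_distrib, mul_sum]
    congr 1
    exact sum_congr rfl fun j _ => by ring
  rw [this]
  linarith [mul_nonneg hc hgain]

theorem exists_isRoundingStep (hd : IsFeasibleDirection x d) (hx : IsFracAlloc x) (hne : d ≠ 0)
    (hgain : ∀ i, 0 ≤ ∑ j, (w i j : ℝ) * d i j) : ∃ x', IsRoundingStep w x x' := by
  obtain ⟨i₀, j₀, hneg⟩ := hd.exists_neg hne
  obtain ⟨c, hc, hnn, ⟨i, j⟩, hdij, hzero⟩ :=
    exists_max_step (fun e : N × M => x e.1 e.2) (fun e => d e.1 e.2) (fun e => (hx.1 _ _).1)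
      (fun e he => (hd.1 _ _ he.ne).1) ⟨(i₀, j₀), hneg⟩
  exact ⟨_, hd.isFracAlloc_add hx fun i j => hnn (i, j), hd.posSupport_add_ssubset hdij.ne hzero,
    fun i => hd.guaranteedValue_le hc.le (hgain i)⟩

end IsFeasibleDirection

theorem exists_isRoundingStep_of_fracSupport_eq_singleton (hx : IsFracAlloc x) {i : N} {j : M}
    (hi : fracSupport x i = {j}) : ∃ x', IsRoundingStep w x x' := by
  classical
  have hij : 0 < x i j ∧ x i j < 1 := mem_fracSupport.1 (hi ▸ mem_singleton_self j)
  obtain ⟨i', hi', hpos'⟩ := hx.exists_ne_pos_of_lt_one hij.2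
  set d := transferDir i i' j
  have hd : IsFeasibleDirection x d := isFeasibleDirection_transferDir hx hij hi' hpos'
  have hzero : x i j + x i j * d i j = 0 := by simp [d, transferDir_apply_self hi']
  have hnn : ∀ a b, 0 ≤ x a b + x i j * d a b := fun a b => by
    by_cases hab : a = i ∧ b = j
    · obtain ⟨rfl, rfl⟩ := hab
      exact hzero.ge
    · exact add_nonneg (hx.1 a b).1 (mul_nonneg hij.1.le (transferDir_nonneg hab))
  refine ⟨_, hd.isFracAlloc_add hx hnn,
    hd.posSupport_add_ssubset (by simp [d, transferDir_apply_self hi']) hzero, fun k => ?_⟩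
  by_cases hk : k = i
  · subst hk
    have hempty : fracSupport (fun a b => x a b + x k j * d a b) k = ∅ := by
      refine eq_empty_of_forall_notMem fun b hb => ?_
      have hbj := hi ▸ hd.fracSupport_add_subset _ k hb
      rw [mem_singleton] at hbj
      subst hbj
      simp [hzero] at hb
    have hval : ∑ b, (w k b : ℝ) * (x k b + x k j * d k b) =
        ∑ b, (w k b : ℝ) * x k b - w k j * x k j := by
      simp [d, transferDir_apply_self hi', mul_add, sum_add_distrib, sub_eq_add_neg]
    have hmax : (w k j : ℝ) ≤ fracMax w x k :=
      NNReal.coe_le_coe.2 (le_sup (hi ▸ mem_singleton_self j))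
    have hmax' : fracMax w (fun a b => x a b + x k j * d a b) k = 0 := by
      rw [fracMax, hempty, sup_empty, bot_eq_zero]
    rw [guaranteedValue, guaranteedValue, hval, hmax', NNReal.coe_zero]
    linarith [mul_le_of_le_one_right (w k j).coe_nonneg hij.2.le]
  · exact hd.guaranteedValue_le hij.1.le
      (sum_nonneg fun b _ => mul_nonneg (w k b).coe_nonneg (transferDir_nonneg (by tauto)))

theorem card_image_snd_add_card_erase_lt [DecidableEq N] [DecidableEq M] (hx : IsFracAlloc x)
    (hmulti : ∀ i, #(fracSupport x i) ≠ 1) {i₀ : N} (hi₀ : i₀ ∈ (fracEdges x).image Prod.fst) :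
    #((fracEdges x).image Prod.snd) + #(((fracEdges x).image Prod.fst).erase i₀) <
      #(fracEdges x) := by
  have hitems : 2 * #((fracEdges x).image Prod.snd) ≤ #(fracEdges x) := by
    refine mul_card_image_le_card _ 2 fun j hj => ?_
    obtain ⟨⟨i, j⟩, hij, rfl⟩ := mem_image.1 hj
    rw [mem_fracEdges] at hij
    obtain ⟨i', hi', hpos⟩ := hx.exists_ne_pos_of_lt_one hij.2
    refine one_lt_card.2 ⟨(i, j), by simpa using hij, (i', j), ?_, by simp [hi'.symm]⟩
    simpa using ⟨hpos, by linarith [hx.add_le_one hi' j]⟩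
  have hagents : 2 * #((fracEdges x).image Prod.fst) ≤ #(fracEdges x) := by
    refine mul_card_image_le_card _ 2 fun i hi => ?_
    obtain ⟨⟨i, j⟩, hij, rfl⟩ := mem_image.1 hi
    have hcard : 1 < #(fracSupport x i) :=
      lt_of_le_of_ne (card_pos.2 ⟨j, by simpa using hij⟩) (hmulti i).symm
    obtain ⟨j₁, hj₁, j₂, hj₂, hne⟩ := one_lt_card.1 hcard
    exact one_lt_card.2 ⟨(i, j₁), by simpa using hj₁, (i, j₂), by simpa using hj₂, by simp [hne]⟩
  have := card_erase_of_mem hi₀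
  have := card_pos.2 ⟨i₀, hi₀⟩
  omega

theorem exists_isFeasibleDirection (hx : IsFracAlloc x) (hmulti : ∀ i, #(fracSupport x i) ≠ 1)
    {i₀ : N} {j₀ : M} (h₀ : 0 < x i₀ j₀ ∧ x i₀ j₀ < 1) :
    ∃ d, IsFeasibleDirection x d ∧ d ≠ 0 ∧ ∀ i ≠ i₀, ∑ j, (w i j : ℝ) * d i j = 0 := by
  classical
  set E := fracEdges x
  have hi₀ : i₀ ∈ E.image Prod.fst := mem_image.2 ⟨(i₀, j₀), by simpa [E] using h₀, rfl⟩
  -- Unknowns: the fractional entries. Equations: the column sum of each fractional item, and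
  -- the value of each agent other than `i₀`.
  let a : M ⊕ N → N × M → ℝ := Sum.elim (fun j e => if e.2 = j then 1 else 0)
    (fun i e => if e.1 = i then (w i e.2 : ℝ) else 0)
  obtain ⟨d, hne, hsupp, hsol⟩ := exists_ne_zero_sum_mul_eq_zero_of_card_lt E
    ((E.image Prod.snd).disjSum ((E.image Prod.fst).erase i₀)) a
    (by rw [card_disjSum]; exact card_image_snd_add_card_erase_lt hx hmulti hi₀)
  have hfrac : ∀ i j, d (i, j) ≠ 0 → 0 < x i j ∧ x i j < 1 := fun i j h => by
    by_contra h'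
    exact h (hsupp _ (by simpa [E] using h'))
  refine ⟨fun i j => d (i, j), ⟨hfrac, fun j => ?_⟩,
    fun h => hne (funext fun e => congrFun (congrFun h e.1) e.2), fun i hi => ?_⟩
  · by_cases hj : j ∈ E.image Prod.snd
    · simpa [a, Fintype.sum_prod_type] using hsol (.inl j) (by simpa using hj)
    · refine sum_eq_zero fun i _ => ?_
      by_contra h
      exact hj (mem_image.2 ⟨(i, j), by simpa [E] using hfrac i j h, rfl⟩)
  · by_cases hi' : i ∈ E.image Prod.fst
    · simpa [a, Fintype.sum_prod_type] using hsol (.inr i) (by simpa [hi] using hi')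
    · refine sum_eq_zero fun j _ => ?_
      by_contra h
      exact hi' (mem_image.2 ⟨(i, j), by simpa [E] using hfrac i j (right_ne_zero_of_mul h), rfl⟩)

theorem exists_isRoundingStep (hx : IsFracAlloc x) {i₀ : N} {j₀ : M}
    (h₀ : 0 < x i₀ j₀ ∧ x i₀ j₀ < 1) : ∃ x', IsRoundingStep w x x' := by
  by_cases hsingle : ∃ i, #(fracSupport x i) = 1
  · obtain ⟨i, hi⟩ := hsingle
    obtain ⟨j, hj⟩ := card_eq_one.1 hi
    exact exists_isRoundingStep_of_fracSupport_eq_singleton hx hj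
  push Not at hsingle
  obtain ⟨d, hd, hne, hbalanced⟩ := exists_isFeasibleDirection (w := w) hx hsingle h₀
  rcases le_total 0 (∑ j, (w i₀ j : ℝ) * d i₀ j) with hgain | hloss
  · refine hd.exists_isRoundingStep hx hne fun i => ?_
    by_cases hi : i = i₀
    · exact hi ▸ hgain
    · exact (hbalanced i hi).ge
  · refine hd.neg.exists_isRoundingStep hx (neg_ne_zero.2 hne) fun i => ?_
    by_cases hi : i = i₀
    · simpa [hi, sum_neg_distrib] using hloss
    · simp [hbalanced i hi]

theorem exists_partition_guaranteedValue_le (w : N → M → ℝ≥0) (x : N → M → ℝ)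
    (hx : IsFracAlloc x) :
    ∃ Z : N → Finset M, IsPartition Z ∧ ∀ i, guaranteedValue w x i ≤ ∑ j ∈ Z i, (w i j : ℝ) := by
  by_cases hfrac : ∃ i j, 0 < x i j ∧ x i j < 1
  · obtain ⟨i₀, j₀, h₀⟩ := hfrac
    obtain ⟨x', hx', hlt, hle⟩ := exists_isRoundingStep (w := w) hx h₀
    obtain ⟨Z, hZ, hval⟩ := exists_partition_guaranteedValue_le w x' hx'
    exact ⟨Z, hZ, fun i => (hle i).trans (hval i)⟩
  · push Not at hfrac
    obtain ⟨Z, hZ, hval⟩ :=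
      hx.exists_partition_of_integral (fun i j h => (hfrac i j h.1).not_gt h.2) fun i j => w i j
    refine ⟨Z, hZ, fun i => ?_⟩
    rw [guaranteedValue, ← hval i]
    linarith [(fracMax w x i).coe_nonneg]
termination_by #(posSupport x)
decreasing_by exact card_lt_card hlt

end FracAlloc

open FracAlloc in
theorem stmt2_general {N M : Type*} [Fintype N] [Fintype M]
    (v : N → Finset M → NNReal) (hv : ∀ i, IsAdditive (v i))
    (x : N → M → ℝ) (hx : IsFracAlloc x)
    (ε : ℝ)
    (hsmall : ∀ i, (maxOnSupport (v i) (x i) : ℝ) ≤ ε * ∑ j, (v i {j} : ℝ) * x i j) :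
    ∃ Z : N → Finset M, IsPartition Z ∧
      ∀ i, (1 - ε) * (∑ j, (v i {j} : ℝ) * x i j) ≤ (v i (Z i) : ℝ) := by
  obtain ⟨Z, hZ, hval⟩ := exists_partition_guaranteedValue_le (fun i j => v i {j}) x hx
  refine ⟨Z, hZ, fun i => ?_⟩
  have hmax : (fracMax (fun i j => v i {j}) x i : ℝ) ≤ maxOnSupport (v i) (x i) :=
    NNReal.coe_le_coe.2 (sup_mono fun j hj => mem_filter.2 ⟨mem_univ j, (mem_fracSupport.1 hj).1⟩)
  have hZi : (v i (Z i) : ℝ) = ∑ j ∈ Z i, (v i {j} : ℝ) := by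
    rw [hv i, NNReal.coe_sum]
  have := hval i
  rw [guaranteedValue] at this
  linarith [hsmall i]

/-- integral allocation losing a `(1-ε)` factor when all items are small,
additive valuations. -/
theorem stmt2 {N M : Type*} [Fintype N] [Fintype M] [DecidableEq M]
    (v : N → Finset M → NNReal) (hv : ∀ i, IsAdditive (v i))
    (x : N → M → ℝ) (hx : IsFracAlloc x)
    (ε : ℝ) (hε0 : 0 < ε) (hε1 : ε < 1)
    (hsmall : ∀ i, (maxOnSupport (v i) (x i) : ℝ) ≤ ε * ∑ j, (v i {j} : ℝ) * x i j) :
    ∃ Z : N → Finset M, IsPartition Z ∧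
      ∀ i, (1 - ε) * (∑ j, (v i {j} : ℝ) * x i j) ≤ (v i (Z i) : ℝ) :=
  stmt2_general v hv x hx ε hsmall
end

section
/- Let every agent i ∈ N have a monotone, submodular, normalized valuation v_i : 2^M → ℝ≥0, and let x be a fractional allocation of the items M to the agents N. Then there exists a fractional allocation x' such that (i) the allocation graph G_{x'} is acyclic, and (ii) for every agent i, V_i(x'_i) ≥ V_i(x_i), where V_i is the multilinear extension of v_i. -/
open Finset

/-!
While the allocation graph has a cycle `i₀ — j₀ — i₁ — j₁ — ⋯ — i₀`, shift mass around it: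
agent `iₜ₊₁` receives `σₜ` of item `jₜ` from agent `iₜ`. Each multilinear extension `F` is affine
in every coordinate, and submodularity makes its mixed second derivatives nonpositive, so an agent
who gains `a` of item `g` and loses `b` of item `l` changes value by at least
`a ∂F/∂y_g - b ∂F/∂y_l`. Weights `σ` making all these first-order changes nonnegative exist in one
of the two directions around the cycle (compare the products of the partial derivatives along the
cycle). Scaling `σ` until an edge is emptied shrinks the support of the allocation, so the process
terminates with an acyclic allocation.
-/

open Function

lemma SimpleGraph.exists_periodic_cycle_of_not_isAcyclic {V : Type*} {G : SimpleGraph V}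
    (h : ¬ G.IsAcyclic) :
    ∃ (n : ℕ) (P : ℕ → V), 3 ≤ n ∧ (∀ i, G.Adj (P i) (P (i + 1))) ∧
      ∀ i j, P i = P j ↔ i ≡ j [MOD n] := by
  simp only [SimpleGraph.IsAcyclic, not_forall, not_not] at h
  obtain ⟨u, c, hc⟩ := h
  have hn := hc.three_le_length
  refine ⟨c.length, fun i => c.getVert (i % c.length), hn, fun i => ?_, fun i j => ?_⟩
  · have hlt := Nat.mod_lt i (by omega : 0 < c.length)
    have hadj := c.adj_getVert_succ hlt
    dsimp only
    rcases Nat.lt_or_ge (i % c.length + 1) c.length with hi | hi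
    · rwa [Nat.add_mod, Nat.mod_eq_of_lt (by omega : 1 < c.length), Nat.mod_eq_of_lt hi]
    · rw [Nat.add_mod, Nat.mod_eq_of_lt (by omega : 1 < c.length),
        show i % c.length + 1 = c.length by omega, Nat.mod_self, c.getVert_zero]
      rwa [show i % c.length + 1 = c.length by omega, c.getVert_length] at hadj
  · refine ⟨fun he => hc.getVert_injOn' ?_ ?_ he, fun he => congrArg c.getVert he⟩
    · simp only [Set.mem_ofPred_eq]; have := Nat.mod_lt i (by omega : 0 < c.length); omega
    · simp only [Set.mem_ofPred_eq]; have := Nat.mod_lt j (by omega : 0 < c.length); omega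

lemma exists_pos_add_smul_nonneg_eq_zero {ι : Type*} [Fintype ι] {x d : ι → ℝ} (hx : 0 ≤ x)
    (hd : ∀ p, d p < 0 → 0 < x p) (hneg : ∃ p, d p < 0) :
    ∃ c : ℝ, 0 < c ∧ 0 ≤ x + c • d ∧ ∃ p, d p < 0 ∧ x p + c * d p = 0 := by
  classical
  obtain ⟨p₀, hp₀⟩ := hneg
  obtain ⟨p, hp, hmin⟩ := (Finset.univ.filter fun p => d p < 0).exists_min_image
    (fun p => x p / -d p) ⟨p₀, Finset.mem_filter.2 ⟨Finset.mem_univ _, hp₀⟩⟩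
  have hdp : d p < 0 := (Finset.mem_filter.1 hp).2
  refine ⟨x p / -d p, div_pos (hd p hdp) (neg_pos.2 hdp), fun q => ?_, p, hdp, ?_⟩
  · simp only [Pi.zero_apply, Pi.add_apply, Pi.smul_apply, smul_eq_mul]
    rcases le_or_gt 0 (d q) with hq | hq
    · exact add_nonneg (hx q) (mul_nonneg (div_pos (hd p hdp) (neg_pos.2 hdp)).le hq)
    · have := (le_div_iff₀ (neg_pos.2 hq)).1 (hmin q (Finset.mem_filter.2 ⟨Finset.mem_univ q, hq⟩))
      linarith
  · have hd0 : d p ≠ 0 := hdp.ne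
    field_simp
    ring

namespace CycleCanceling

section Multilinear

variable {M : Type*} [Fintype M] [DecidableEq M]

def productWeight (y : M → ℝ) (S : Finset M) : ℝ :=
  (∏ j ∈ S, y j) * ∏ j ∈ Sᶜ, (1 - y j)

def multilinearExt (h : Finset M → ℝ) (y : M → ℝ) : ℝ :=
  ∑ S, h S * productWeight y S

lemma mlExt_eq_multilinearExt (v : Finset M → NNReal) (y : M → ℝ) :
    mlExt v y = multilinearExt (fun S => (v S : ℝ)) y := rfl

lemma productWeight_nonneg {y : M → ℝ} (hy : ∀ m, 0 ≤ y m ∧ y m ≤ 1) (S : Finset M) :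
    0 ≤ productWeight y S :=
  mul_nonneg (Finset.prod_nonneg fun m _ => (hy m).1)
    (Finset.prod_nonneg fun m _ => sub_nonneg.2 (hy m).2)

omit [Fintype M] in
lemma prod_one_sub_update (y : M → ℝ) (j : M) (c : ℝ) (s : Finset M) :
    ∏ m ∈ s, (1 - update y j c m) = ∏ m ∈ s, update (fun m => 1 - y m) j (1 - c) m := by
  refine Finset.prod_congr rfl fun m _ => ?_
  rcases eq_or_ne m j with rfl | h
  · simp
  · simp [h]

lemma productWeight_update_of_mem {j : M} {S : Finset M} (hj : j ∈ S) (y : M → ℝ) (c : ℝ) :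
    productWeight (update y j c) S = c * ((∏ m ∈ S \ {j}, y m) * ∏ m ∈ Sᶜ, (1 - y m)) := by
  have hjc : j ∉ Sᶜ := Finset.notMem_compl.2 hj
  rw [productWeight, prod_one_sub_update, Finset.prod_update_of_mem hj,
    Finset.prod_update_of_notMem hjc]
  ring

lemma productWeight_update_of_notMem {j : M} {S : Finset M} (hj : j ∉ S) (y : M → ℝ) (c : ℝ) :
    productWeight (update y j c) S = (1 - c) * ((∏ m ∈ S, y m) * ∏ m ∈ Sᶜ \ {j}, (1 - y m)) := by
  rw [productWeight, prod_one_sub_update, Finset.prod_update_of_notMem hj,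
    Finset.prod_update_of_mem (Finset.mem_compl.2 hj)]
  ring

lemma productWeight_update (y : M → ℝ) (j : M) (c : ℝ) (S : Finset M) :
    productWeight (update y j c) S
      = (1 - c) * productWeight (update y j 0) S + c * productWeight (update y j 1) S := by
  by_cases hj : j ∈ S
  · simp only [productWeight_update_of_mem hj]; ring
  · simp only [productWeight_update_of_notMem hj]; ring

lemma productWeight_update_one_insert {j : M} {T : Finset M} (hj : j ∉ T) (y : M → ℝ) :
    productWeight (update y j 1) (insert j T) = productWeight (update y j 0) T := by
  rw [productWeight_update_of_mem (Finset.mem_insert_self j T),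
    productWeight_update_of_notMem hj, Finset.compl_insert, Finset.sdiff_singleton_eq_erase,
    Finset.sdiff_singleton_eq_erase, Finset.erase_insert hj]
  ring

lemma sum_finset_eq_sum_powerset_erase (j : M) (f : Finset M → ℝ) :
    ∑ S, f S = ∑ T ∈ (Finset.univ.erase j).powerset, (f T + f (insert j T)) := by
  rw [Finset.sum_add_distrib, ← Finset.sum_powerset_insert (Finset.notMem_erase j _),
    Finset.insert_erase (Finset.mem_univ j), Finset.powerset_univ]

def marginal (h : Finset M → ℝ) (j : M) (S : Finset M) : ℝ :=
  h (insert j S) - h S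

lemma multilinearExt_nonneg {h : Finset M → ℝ} (hh : ∀ S, 0 ≤ h S) {y : M → ℝ}
    (hy : ∀ m, 0 ≤ y m ∧ y m ≤ 1) : 0 ≤ multilinearExt h y :=
  Finset.sum_nonneg fun S _ => mul_nonneg (hh S) (productWeight_nonneg hy S)

lemma multilinearExt_nonpos {h : Finset M → ℝ} (hh : ∀ S, h S ≤ 0) {y : M → ℝ}
    (hy : ∀ m, 0 ≤ y m ∧ y m ≤ 1) : multilinearExt h y ≤ 0 :=
  Finset.sum_nonpos fun S _ => mul_nonpos_of_nonpos_of_nonneg (hh S) (productWeight_nonneg hy S)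

omit [Fintype M] in
lemma update_mem_unitCube {y : M → ℝ} (hy : ∀ m, 0 ≤ y m ∧ y m ≤ 1) (j : M) {c : ℝ}
    (hc : 0 ≤ c ∧ c ≤ 1) : ∀ m, 0 ≤ update y j c m ∧ update y j c m ≤ 1 := by
  intro m
  rcases eq_or_ne m j with rfl | hm
  · simpa using hc
  · simpa [hm] using hy m

lemma multilinearExt_update_affine (h : Finset M → ℝ) (y : M → ℝ) (j : M) (c : ℝ) :
    multilinearExt h (update y j c)
      = (1 - c) * multilinearExt h (update y j 0) + c * multilinearExt h (update y j 1) := by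
  rw [multilinearExt, multilinearExt, multilinearExt, Finset.mul_sum, Finset.mul_sum,
    ← Finset.sum_add_distrib]
  exact Finset.sum_congr rfl fun S _ => by rw [productWeight_update]; ring

lemma multilinearExt_update_one (h : Finset M → ℝ) (y : M → ℝ) (j : M) :
    multilinearExt h (update y j 1)
      = multilinearExt (fun S => h (insert j S)) (update y j 0) := by
  rw [multilinearExt, multilinearExt, sum_finset_eq_sum_powerset_erase j,
    sum_finset_eq_sum_powerset_erase j]
  refine Finset.sum_congr rfl fun T hT => ?_
  have hj : j ∉ T := fun h => Finset.notMem_erase j _ (Finset.mem_powerset.1 hT h)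
  rw [productWeight_update_one_insert hj, Finset.insert_idem,
    productWeight_update_of_notMem hj, productWeight_update_of_mem (Finset.mem_insert_self j T)]
  ring

/-- The partial derivative `∂F/∂y_j`, which does not depend on `y_j`. -/
def multilinearPartial (h : Finset M → ℝ) (j : M) (y : M → ℝ) : ℝ :=
  multilinearExt (marginal h j) (update y j 0)

lemma multilinearExt_update (h : Finset M → ℝ) (y : M → ℝ) (j : M) (c : ℝ) :
    multilinearExt h (update y j c) = multilinearExt h y + (c - y j) * multilinearPartial h j y := by
  have hpartial : multilinearPartial h j y
      = multilinearExt h (update y j 1) - multilinearExt h (update y j 0) := by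
    rw [multilinearExt_update_one, multilinearPartial, multilinearExt, multilinearExt,
      multilinearExt, ← Finset.sum_sub_distrib]
    exact Finset.sum_congr rfl fun S _ => by rw [marginal]; ring
  have hy := multilinearExt_update_affine h y j (y j)
  rw [update_eq_self] at hy
  rw [multilinearExt_update_affine, hy, hpartial]
  ring

lemma multilinearPartial_nonneg {h : Finset M → ℝ} {j : M} (hh : ∀ S, h S ≤ h (insert j S))
    {y : M → ℝ} (hy : ∀ m, 0 ≤ y m ∧ y m ≤ 1) : 0 ≤ multilinearPartial h j y :=
  multilinearExt_nonneg (fun S => sub_nonneg.2 (hh S)) (update_mem_unitCube hy j (by norm_num))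

lemma multilinearPartial_update (h : Finset M → ℝ) {g l : M} (hgl : g ≠ l) (y : M → ℝ) (c : ℝ) :
    multilinearPartial h l (update y g c) = multilinearPartial h l y
      + (c - y g) * multilinearPartial (marginal h l) g (update y l 0) := by
  rw [multilinearPartial, update_comm hgl, multilinearExt_update, update_of_ne hgl]
  rfl

omit [Fintype M] in
lemma marginal_marginal_nonpos {h : Finset M → ℝ}
    (hsub : ∀ A B, h (A ∪ B) + h (A ∩ B) ≤ h A + h B) {g l : M} (hgl : g ≠ l) (S : Finset M) :
    marginal (marginal h l) g S ≤ 0 := by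
  have hunion : insert g S ∪ insert l S = insert l (insert g S) := by
    ext; simp only [Finset.mem_union, Finset.mem_insert]; tauto
  have hinter : insert g S ∩ insert l S = S := by
    ext; simp only [Finset.mem_inter, Finset.mem_insert]; aesop
  have := hsub (insert g S) (insert l S)
  rw [hunion, hinter] at this
  simp only [marginal]
  linarith

/-- The mixed term `a * b * ∂²F/∂y_g∂y_l` omitted on the left is nonnegative by submodularity. -/
lemma multilinearExt_update_update_ge {h : Finset M → ℝ}
    (hsub : ∀ A B, h (A ∪ B) + h (A ∩ B) ≤ h A + h B) {y : M → ℝ}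
    (hy : ∀ m, 0 ≤ y m ∧ y m ≤ 1) {g l : M} (hgl : g ≠ l) {a b : ℝ} (hab : a * b ≤ 0) :
    multilinearExt h y + a * multilinearPartial h g y + b * multilinearPartial h l y
      ≤ multilinearExt h (update (update y g (y g + a)) l (y l + b)) := by
  have hcross : multilinearPartial (marginal h l) g (update y l 0) ≤ 0 :=
    multilinearExt_nonpos (marginal_marginal_nonpos hsub hgl)
      (update_mem_unitCube (update_mem_unitCube hy l (by norm_num)) g (by norm_num))
  rw [multilinearExt_update, multilinearExt_update, multilinearPartial_update h hgl,
    update_of_ne hgl.symm]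
  nlinarith [mul_nonneg_of_nonpos_of_nonpos hab hcross]

end Multilinear

section Cycle

variable {N M : Type*}

@[simp] lemma allocGraph_adj_inl_inr {x : N → M → ℝ} {i : N} {j : M} :
    (allocGraph x).Adj (Sum.inl i) (Sum.inr j) ↔ 0 < x i j := by
  simp [allocGraph]

@[simp] lemma allocGraph_adj_inr_inl {x : N → M → ℝ} {i : N} {j : M} :
    (allocGraph x).Adj (Sum.inr j) (Sum.inl i) ↔ 0 < x i j := by
  simp [allocGraph]

lemma allocGraph_adj_isLeft {x : N → M → ℝ} {a b : N ⊕ M} (h : (allocGraph x).Adj a b) :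
    b.isLeft ↔ ¬ a.isLeft := by
  rcases h with ⟨i, j, rfl, rfl, -⟩ | ⟨i, j, rfl, rfl, -⟩ <;> simp

/-- The cycle `agent 0 — item 0 — agent 1 — item 1 — ⋯ — item (k+1) — agent 0` in the
allocation graph of `x`. -/
structure AllocCycle (x : N → M → ℝ) (k : ℕ) where
  agent : Fin (k + 2) → N
  item : Fin (k + 2) → M
  agent_injective : agent.Injective
  item_injective : item.Injective
  pos_agent_item : ∀ t, 0 < x (agent t) (item t)
  pos_next_agent_item : ∀ t, 0 < x (agent (t + 1)) (item t)

lemma exists_allocCycle {x : N → M → ℝ} (h : ¬ (allocGraph x).IsAcyclic) :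
    ∃ k, Nonempty (AllocCycle x k) := by
  obtain ⟨n, P, hn, hadj, hP⟩ := SimpleGraph.exists_periodic_cycle_of_not_isAcyclic h
  obtain ⟨o, ho⟩ : ∃ o, (P o).isLeft := by
    by_cases h0 : (P 0).isLeft
    · exact ⟨0, h0⟩
    · exact ⟨1, (allocGraph_adj_isLeft (hadj 0)).2 h0⟩
  have hside : ∀ i, (P (o + i)).isLeft ↔ Even i := by
    intro i
    induction i with
    | zero => simpa using ho
    | succ i ih => rw [← add_assoc, allocGraph_adj_isLeft (hadj _), ih, Nat.even_add_one]
  obtain ⟨m, rfl⟩ : Even n := (hside n).1 (by rwa [(hP _ _).2 Nat.add_modEq_right])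
  obtain ⟨k, rfl⟩ : ∃ k, m = k + 2 := ⟨m - 2, by omega⟩
  have hmod : ∀ r s t, P (o + 2 * s + r) = P (o + 2 * t + r) ↔ s ≡ t [MOD k + 2] := by
    intro r s t
    rw [hP, ← two_mul, ← Nat.ModEq.mul_left_cancel_iff' (a := s) (b := t) two_ne_zero]
    exact ⟨fun h => (h.add_right_cancel' r).add_left_cancel' o,
      fun h => (h.add_left o).add_right r⟩
  choose I hI using fun t => Sum.isLeft_iff.1 ((hside (2 * t)).2 (even_two_mul t))
  choose J hJ using fun t => Sum.isRight_iff.1 <| Sum.not_isLeft.1 <|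
    (hside (2 * t + 1)).not.2 (Nat.not_even_iff_odd.2 (odd_two_mul_add_one t))
  simp only [← add_assoc] at hJ
  have hsucc (t : Fin (k + 2)) : ((t + 1 : Fin (k + 2)) : ℕ) ≡ t + 1 [MOD k + 2] := by
    rw [Fin.val_add, Fin.val_one]; exact Nat.mod_modEq _ _
  refine ⟨k, ⟨fun t => I t, fun t => J t, fun s t hst => ?_, fun s t hst => ?_,
    fun t => ?_, fun t => ?_⟩⟩
  · refine Fin.ext ((hmod 0 s t).1 ?_ |>.eq_of_lt_of_lt s.isLt t.isLt)
    simp only [add_zero, hI, hst]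
  · refine Fin.ext ((hmod 1 s t).1 ?_ |>.eq_of_lt_of_lt s.isLt t.isLt)
    simp only [hJ, hst]
  · simpa [hI, hJ] using hadj (o + 2 * t)
  · have hnext : P (o + 2 * t + 1 + 1) = Sum.inl (I ↑(t + 1)) := by
      rw [show o + 2 * t + 1 + 1 = o + 2 * (t + 1) + 0 by ring, ← (hmod 0 _ _).2 (hsucc t),
        add_zero, hI]
    simpa [hJ, hnext] using hadj (o + 2 * t + 1)

end Cycle

section Weights

variable {k : ℕ}

/-- With these weights the inequality of `exists_cycle_weights` holds with equality except at the
wrap-around `t = Fin.last (k + 1)`, where it amounts to `∏ L ≤ ∏ G`. -/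
def cycleWeight (G L : Fin (k + 2) → ℝ) (t : Fin (k + 2)) : ℝ :=
  (∏ r ∈ Finset.Iio t, G r) * ∏ r ∈ Finset.Ioi t, L r

lemma cycleWeight_succ_mul (G L : Fin (k + 2) → ℝ) {t : Fin (k + 2)} (ht : t ≠ Fin.last (k + 1)) :
    cycleWeight G L (t + 1) * L (t + 1) = cycleWeight G L t * G t := by
  obtain ⟨s, rfl⟩ := Fin.exists_castSucc_eq.2 ht
  have hmax : ¬ IsMax s.castSucc := not_isMax_iff_ne_top.2 ht
  rw [Fin.coeSucc_eq_succ, cycleWeight, cycleWeight, ← Fin.orderSucc_castSucc,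
    Finset.Iio_succ_eq_Iic_of_not_isMax hmax, ← Finset.prod_Iio_mul_eq_prod_Iic,
    ← Finset.Ici_succ_eq_Ioi_of_not_isMax hmax, ← Finset.mul_prod_Ioi_eq_prod_Ici]
  ring

lemma cycleWeight_zero_mul (G L : Fin (k + 2) → ℝ) :
    cycleWeight G L 0 * L 0 = ∏ t, L t := by
  rw [cycleWeight, ← bot_eq_zero, Finset.Iio_bot, Finset.prod_empty, one_mul, mul_comm,
    Finset.mul_prod_Ioi_eq_prod_Ici, Finset.Ici_bot]

lemma cycleWeight_last_mul (G L : Fin (k + 2) → ℝ) :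
    cycleWeight G L (Fin.last (k + 1)) * G (Fin.last (k + 1)) = ∏ t, G t := by
  rw [cycleWeight, ← Fin.top_eq_last, Finset.Ioi_top, Finset.prod_empty, mul_one,
    Finset.prod_Iio_mul_eq_prod_Iic, Finset.Iic_top]

lemma cycleWeight_pos {G L : Fin (k + 2) → ℝ} (hG : ∀ t, 0 < G t) (hL : ∀ t, 0 < L t)
    (t : Fin (k + 2)) : 0 < cycleWeight G L t :=
  mul_pos (Finset.prod_pos fun r _ => hG r) (Finset.prod_pos fun r _ => hL r)

/-- `G t` and `L t` stand for the partial derivatives in item `t` of agents `t + 1` and `t`; the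
conclusion then says that shifting `σ` around the cycle (`AllocCycle.shift`) changes the value of
every agent by a nonnegative first-order amount. -/
lemma exists_cycle_weights {G L : Fin (k + 2) → ℝ} (hG : 0 ≤ G) (hL : 0 ≤ L) :
    ∃ σ : Fin (k + 2) → ℝ, σ ≠ 0 ∧ (0 ≤ σ ∨ σ ≤ 0) ∧ ∀ t, σ (t + 1) * L (t + 1) ≤ σ t * G t := by
  by_cases hL0 : ∃ u, L u = 0
  · obtain ⟨u, hu⟩ := hL0
    have hσ : (0 : Fin (k + 2) → ℝ) ≤ Pi.single u 1 := Pi.single_nonneg.2 zero_le_one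
    refine ⟨Pi.single u 1, by simp, Or.inl hσ, fun t => ?_⟩
    have hlhs : (Pi.single u 1 : Fin (k + 2) → ℝ) (t + 1) * L (t + 1) = 0 := by
      rcases eq_or_ne (t + 1) u with h | h
      · rw [h, hu, mul_zero]
      · rw [Pi.single_eq_of_ne h, zero_mul]
    rw [hlhs]
    exact mul_nonneg (hσ t) (hG t)
  by_cases hG0 : ∃ u, G u = 0
  · obtain ⟨u, hu⟩ := hG0
    have hσ : (-Pi.single u 1 : Fin (k + 2) → ℝ) ≤ 0 :=
      neg_nonpos.2 (Pi.single_nonneg.2 zero_le_one)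
    refine ⟨-Pi.single u 1, by simp, Or.inr hσ, fun t => ?_⟩
    have hrhs : (-Pi.single u 1 : Fin (k + 2) → ℝ) t * G t = 0 := by
      rcases eq_or_ne t u with h | h
      · rw [h, hu, mul_zero]
      · rw [Pi.neg_apply, Pi.single_eq_of_ne h, neg_zero, zero_mul]
    rw [hrhs]
    exact mul_nonpos_of_nonpos_of_nonneg (hσ _) (hL _)
  push Not at hL0 hG0
  have hGpos t : 0 < G t := (hG t).lt_of_ne (hG0 t).symm
  have hLpos t : 0 < L t := (hL t).lt_of_ne (hL0 t).symm
  have hτ := cycleWeight_pos hGpos hLpos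
  rcases le_total (∏ t, L t) (∏ t, G t) with hprod | hprod
  · refine ⟨cycleWeight G L, fun h => (hτ 0).ne' (congrFun h 0), Or.inl fun t => (hτ t).le,
      fun t => ?_⟩
    rcases eq_or_ne t (Fin.last (k + 1)) with rfl | ht
    · rw [Fin.last_add_one, cycleWeight_zero_mul, cycleWeight_last_mul]; exact hprod
    · exact (cycleWeight_succ_mul G L ht).le
  · refine ⟨-cycleWeight G L, fun h => (hτ 0).ne' (neg_eq_zero.1 (congrFun h 0)),
      Or.inr fun t => neg_nonpos.2 (hτ t).le, fun t => ?_⟩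
    simp only [Pi.neg_apply, neg_mul, neg_le_neg_iff]
    rcases eq_or_ne t (Fin.last (k + 1)) with rfl | ht
    · rw [Fin.last_add_one, cycleWeight_zero_mul, cycleWeight_last_mul]; exact hprod
    · exact (cycleWeight_succ_mul G L ht).ge

end Weights

variable {N M : Type*}

noncomputable def allocSupport [Fintype N] [Fintype M] (x : N → M → ℝ) : Finset (N × M) :=
  Finset.univ.filter fun p => x p.1 p.2 ≠ 0

lemma allocSupport_ssubset [Fintype N] [Fintype M] {x z : N → M → ℝ}
    (hsupp : ∀ a b, x a b = 0 → z a b = 0) {a : N} {b : M} (hx : x a b ≠ 0) (hz : z a b = 0) :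
    allocSupport z ⊂ allocSupport x := by
  refine Finset.ssubset_iff_of_subset (fun p hp => ?_) |>.2 ⟨(a, b), ?_, ?_⟩
  · simp only [allocSupport, Finset.mem_filter, Finset.mem_univ, true_and] at hp ⊢
    exact fun h => hp (hsupp _ _ h)
  · simpa [allocSupport] using hx
  · simpa [allocSupport] using hz

lemma isFracAlloc_of_nonneg [Fintype N] {x : N → M → ℝ} (h0 : ∀ i j, 0 ≤ x i j)
    (h1 : ∀ j, ∑ i, x i j = 1) : IsFracAlloc x :=
  ⟨fun i j => ⟨h0 i j, h1 j ▸ Finset.single_le_sum (fun a _ => h0 a j) (Finset.mem_univ i)⟩, h1⟩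

namespace AllocCycle

variable [DecidableEq N] [DecidableEq M] {x : N → M → ℝ} {k : ℕ} (C : AllocCycle x k)

/-- Move `σ t` of item `t` from agent `t` to agent `t + 1`, for every `t`. -/
def shift (σ : Fin (k + 2) → ℝ) (a : N) (b : M) : ℝ :=
  ∑ t, if b = C.item t then
    σ t * ((if a = C.agent (t + 1) then 1 else 0) - (if a = C.agent t then 1 else 0)) else 0

lemma shift_apply_item (σ : Fin (k + 2) → ℝ) (a : N) (s : Fin (k + 2)) :
    C.shift σ a (C.item s) =
      σ s * ((if a = C.agent (s + 1) then 1 else 0) - (if a = C.agent s then 1 else 0)) := by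
  rw [shift, Finset.sum_eq_single s (fun t _ hts => if_neg (C.item_injective.ne hts.symm))
    (fun h => absurd (Finset.mem_univ s) h), if_pos rfl]

lemma shift_apply_of_forall_ne (σ : Fin (k + 2) → ℝ) (a : N) {b : M} (hb : ∀ s, b ≠ C.item s) :
    C.shift σ a b = 0 :=
  Finset.sum_eq_zero fun t _ => if_neg (hb t)

lemma shift_smul (c : ℝ) (σ : Fin (k + 2) → ℝ) : C.shift (c • σ) = c • C.shift σ := by
  ext a b
  simp only [shift, Pi.smul_apply, smul_eq_mul, Finset.mul_sum, mul_ite, mul_zero, mul_assoc]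

lemma sum_shift [Fintype N] (σ : Fin (k + 2) → ℝ) (b : M) : ∑ a, C.shift σ a b = 0 := by
  simp only [shift]
  rw [Finset.sum_comm]
  refine Finset.sum_eq_zero fun t _ => ?_
  split_ifs <;> simp [← Finset.mul_sum, Finset.sum_sub_distrib]

lemma shift_eq_zero_of_forall_ne (σ : Fin (k + 2) → ℝ) {a : N} (ha : ∀ s, a ≠ C.agent s) :
    C.shift σ a = 0 :=
  funext fun b => Finset.sum_eq_zero fun t _ => by simp [ha]

lemma add_shift_agent (σ : Fin (k + 2) → ℝ) (y : M → ℝ) (u : Fin (k + 2)) :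
    y + C.shift σ (C.agent u) = update (update y (C.item (u - 1)) (y (C.item (u - 1)) + σ (u - 1)))
      (C.item u) (y (C.item u) + -σ u) := by
  funext b
  by_cases hb : ∃ s, b = C.item s
  · obtain ⟨s, rfl⟩ := hb
    rw [Pi.add_apply, shift_apply_item]
    simp only [C.agent_injective.eq_iff]
    rcases eq_or_ne s u with rfl | hsu
    · simp
    rcases eq_or_ne s (u - 1) with rfl | hsu'
    · simp [update_of_ne (C.item_injective.ne hsu), hsu.symm]
    · have hsucc : u ≠ s + 1 := fun h => hsu' (eq_sub_of_add_eq h.symm)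
      simp [update_of_ne (C.item_injective.ne hsu), update_of_ne (C.item_injective.ne hsu'),
        hsu.symm, hsucc]
  · push Not at hb
    simp [shift_apply_of_forall_ne _ _ _ hb, hb]

lemma pos_of_shift_ne_zero {σ : Fin (k + 2) → ℝ} {a : N} {b : M} (h : C.shift σ a b ≠ 0) :
    0 < x a b := by
  by_cases hb : ∃ s, b = C.item s
  · obtain ⟨s, rfl⟩ := hb
    rw [shift_apply_item] at h
    by_cases ha : a = C.agent (s + 1)
    · exact ha ▸ C.pos_next_agent_item s
    by_cases ha' : a = C.agent s
    · exact ha' ▸ C.pos_agent_item s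
    simp [ha, ha'] at h
  · push Not at hb
    exact absurd (C.shift_apply_of_forall_ne σ a hb) h

lemma exists_shift_neg {σ : Fin (k + 2) → ℝ} (hσ : σ ≠ 0) (hsign : 0 ≤ σ ∨ σ ≤ 0) :
    ∃ a b, C.shift σ a b < 0 := by
  obtain ⟨s, hs : σ s ≠ 0⟩ := Function.ne_iff.1 hσ
  have hne : C.agent s ≠ C.agent (s + 1) := C.agent_injective.ne (by simp)
  rcases hsign with h | h
  · refine ⟨C.agent s, C.item s, ?_⟩
    rw [shift_apply_item, if_neg hne, if_pos rfl]
    linarith [(show 0 ≤ σ s from h s).lt_of_ne (Ne.symm hs)]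
  · refine ⟨C.agent (s + 1), C.item s, ?_⟩
    rw [shift_apply_item, if_pos rfl, if_neg hne.symm]
    linarith [(show σ s ≤ 0 from h s).lt_of_ne hs]

lemma mlExt_le_add_shift [Fintype M] {v : N → Finset M → NNReal} (hsub : ∀ i, IsSubmodular (v i))
    (hx : ∀ i j, 0 ≤ x i j ∧ x i j ≤ 1) {σ : Fin (k + 2) → ℝ} (hsign : 0 ≤ σ ∨ σ ≤ 0)
    (hσ : ∀ t, σ (t + 1) * multilinearPartial (fun S => (v (C.agent (t + 1)) S : ℝ))
        (C.item (t + 1)) (x (C.agent (t + 1)))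
      ≤ σ t * multilinearPartial (fun S => (v (C.agent (t + 1)) S : ℝ))
        (C.item t) (x (C.agent (t + 1))))
    (a : N) : mlExt (v a) (x a) ≤ mlExt (v a) (x a + C.shift σ a) := by
  by_cases ha : ∃ u, a = C.agent u
  · obtain ⟨u, rfl⟩ := ha
    have hgain := hσ (u - 1)
    rw [sub_add_cancel] at hgain
    have hopposite : σ (u - 1) * -σ u ≤ 0 := by
      rcases hsign with h | h
      · exact mul_nonpos_of_nonneg_of_nonpos (h _) (neg_nonpos.2 (h u))
      · exact mul_nonpos_of_nonpos_of_nonneg (h _) (neg_nonneg.2 (h u))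
    rw [mlExt_eq_multilinearExt, mlExt_eq_multilinearExt, C.add_shift_agent]
    refine le_trans ?_ (multilinearExt_update_update_ge (fun A B => by exact_mod_cast hsub _ A B)
      (hx _) (C.item_injective.ne (by simp)) hopposite)
    linarith
  · push Not at ha
    rw [C.shift_eq_zero_of_forall_ne σ ha, add_zero]

lemma isFracAlloc_add_shift [Fintype N] (hx : IsFracAlloc x) {σ : Fin (k + 2) → ℝ}
    (h0 : ∀ a b, 0 ≤ x a b + C.shift σ a b) : IsFracAlloc (x + C.shift σ) :=
  isFracAlloc_of_nonneg h0 fun b => by simp [Finset.sum_add_distrib, hx.2 b, C.sum_shift]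

end AllocCycle

lemma exists_cycle_canceling_step [Fintype N] [Fintype M] [DecidableEq M]
    {v : N → Finset M → NNReal} (hmono : ∀ i, IsMonotoneVal (v i))
    (hsub : ∀ i, IsSubmodular (v i)) {x : N → M → ℝ} (hx : IsFracAlloc x)
    (hcyc : ¬ (allocGraph x).IsAcyclic) :
    ∃ z, IsFracAlloc z ∧ allocSupport z ⊂ allocSupport x ∧
      ∀ i, mlExt (v i) (x i) ≤ mlExt (v i) (z i) := by
  classical
  obtain ⟨k, ⟨C⟩⟩ := exists_allocCycle hcyc
  have hpartial (i : N) (j : M) : 0 ≤ multilinearPartial (fun S => (v i S : ℝ)) j (x i) :=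
    multilinearPartial_nonneg
      (fun S => NNReal.coe_le_coe.2 (hmono i _ _ (Finset.subset_insert j S))) (hx.1 i)
  obtain ⟨σ, hσ0, hsign, hσ⟩ := exists_cycle_weights
    (G := fun t => multilinearPartial (fun S => (v (C.agent (t + 1)) S : ℝ)) (C.item t)
      (x (C.agent (t + 1))))
    (L := fun t => multilinearPartial (fun S => (v (C.agent t) S : ℝ)) (C.item t) (x (C.agent t)))
    (fun _ => hpartial _ _) (fun _ => hpartial _ _)
  obtain ⟨a, b, hneg⟩ := C.exists_shift_neg hσ0 hsign
  obtain ⟨c, hc, hnonneg, ⟨a', b'⟩, hneg', hzero⟩ := exists_pos_add_smul_nonneg_eq_zero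
    (x := uncurry x) (d := uncurry (C.shift σ)) (fun p => (hx.1 p.1 p.2).1)
    (fun _ hp => C.pos_of_shift_ne_zero hp.ne) ⟨(a, b), hneg⟩
  have hz : x + C.shift (c • σ) = fun i j => x i j + c * C.shift σ i j := by
    rw [C.shift_smul]; rfl
  refine ⟨x + C.shift (c • σ), C.isFracAlloc_add_shift hx ?_, ?_,
    C.mlExt_le_add_shift hsub hx.1 ?_ fun t => ?_⟩
  · exact fun i j => by simpa [C.shift_smul] using hnonneg (i, j)
  · rw [hz]
    refine allocSupport_ssubset (fun i j hij => ?_) (C.pos_of_shift_ne_zero hneg'.ne).ne' hzero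
    have : C.shift σ i j = 0 := by_contra fun h => (C.pos_of_shift_ne_zero h).ne' hij
    simp [hij, this]
  · rcases hsign with h | h
    · exact Or.inl (smul_nonneg hc.le h)
    · exact Or.inr (smul_nonpos_of_nonneg_of_nonpos hc.le h)
  · simp only [Pi.smul_apply, smul_eq_mul, mul_assoc]
    exact mul_le_mul_of_nonneg_left (hσ t) hc.le

end CycleCanceling

theorem stmt3_general {N M : Type*} [Fintype N] [Fintype M] [DecidableEq M]
    (v : N → Finset M → NNReal)
    (hmono : ∀ i, IsMonotoneVal (v i)) (hsub : ∀ i, IsSubmodular (v i))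
    (x : N → M → ℝ) (hx : IsFracAlloc x) :
    ∃ x' : N → M → ℝ, IsFracAlloc x' ∧
      (allocGraph x').IsAcyclic ∧
      ∀ i, mlExt (v i) (x i) ≤ mlExt (v i) (x' i) := by
  induction hn : (CycleCanceling.allocSupport x).card using Nat.strong_induction_on
    generalizing x with
  | _ n ih =>
    by_cases hcyc : (allocGraph x).IsAcyclic
    · exact ⟨x, hx, hcyc, fun _ => le_rfl⟩
    obtain ⟨z, hz, hsupp, hle⟩ :=
      CycleCanceling.exists_cycle_canceling_step hmono hsub hx hcyc
    obtain ⟨x', hx', hacyc, hle'⟩ := ih _ (hn ▸ Finset.card_lt_card hsupp) z hz rfl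
    exact ⟨x', hx', hacyc, fun i => (hle i).trans (hle' i)⟩

/-- cycle canceling for submodular valuations (main theorem). -/
theorem stmt3 {N M : Type*} [Fintype N] [Fintype M] [DecidableEq M]
    (v : N → Finset M → NNReal)
    (hmono : ∀ i, IsMonotoneVal (v i)) (hsub : ∀ i, IsSubmodular (v i))
    (hnorm : ∀ i, IsNormalized (v i))
    (x : N → M → ℝ) (hx : IsFracAlloc x) :
    ∃ x' : N → M → ℝ, IsFracAlloc x' ∧
      (allocGraph x').IsAcyclic ∧
      ∀ i, mlExt (v i) (x i) ≤ mlExt (v i) (x' i) :=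
  stmt3_general v hmono hsub x hx
end

section
/- Let f : 2^M → ℝ≥0 be a monotone, submodular, normalized set function with multilinear extension F and concave closure f^+. Then for every y ∈ [0,1]^M, F(y) ≥ (1 − 1/e) · f^+(y). -/
open Finset

/-! Along the ray `t ↦ t • y` the multilinear extension `F` satisfies
`d/dt F(t y) = ∑ⱼ yⱼ ∂ⱼF(t y) ≥ f⁺(y) - F(t y)`. Indeed, for every set `S`, monotonicity and
submodularity give `f(S) ≤ F(x ∨ 1_S) ≤ F(x) + ∑_{j ∈ S} ∂ⱼF(x)`, because each partial derivative
`∂ⱼF` decreases as `x` grows; averaging over a convex representation `y = ∑ λ_S 1_S` turns the right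
side into `F(x) + ⟨y, ∇F(x)⟩`. As `F(0) = f(∅) = 0`, comparing with the solution of `φ' = C - φ`
gives `F(y) ≥ (1 - 1/e) f⁺(y)`. -/

open Function

lemma le_of_hasDerivAt_of_nonneg {f f' : ℝ → ℝ} {a b : ℝ} (hab : a ≤ b)
    (hf : ∀ t, HasDerivAt f (f' t) t) (hf' : ∀ t ∈ Set.Ioo a b, 0 ≤ f' t) : f a ≤ f b := by
  refine monotoneOn_of_hasDerivWithinAt_nonneg (convex_Icc a b)
    (fun t _ => (hf t).continuousAt.continuousWithinAt) (fun t _ => (hf t).hasDerivWithinAt)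
    (by rwa [interior_Icc]) (Set.left_mem_Icc.2 hab) (Set.right_mem_Icc.2 hab) hab

lemma add_div_exp_le_of_sub_le_deriv {φ φ' : ℝ → ℝ} {C : ℝ} (hφ : ∀ t, HasDerivAt φ (φ' t) t)
    (hC : ∀ t ∈ Set.Ioo 0 1, C - φ t ≤ φ' t) : C + (φ 0 - C) / Real.exp 1 ≤ φ 1 := by
  have hexp := le_of_hasDerivAt_of_nonneg (f := fun t => Real.exp t * (φ t - C)) zero_le_one
    (fun t => (Real.hasDerivAt_exp t).mul ((hφ t).sub_const C)) fun t ht => by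
      have := mul_le_mul_of_nonneg_left (hC t ht) (Real.exp_pos t).le
      linarith
  simp only [Real.exp_zero, one_mul] at hexp
  have hdiv : (φ 0 - C) / Real.exp 1 ≤ φ 1 - C := by
    rw [div_le_iff₀ (Real.exp_pos 1)]
    linarith
  linarith

section MultilinearExtension

variable {M : Type*} [DecidableEq M]

/-- The probability that the random set containing each `k` independently with probability `x k`
agrees with `S` on `A`. -/
noncomputable def cubeWeight (A S : Finset M) (x : M → ℝ) : ℝ :=
  ∏ k ∈ A, if k ∈ S then x k else 1 - x k

lemma cubeWeight_nonneg {x : M → ℝ} (hx : x ∈ Set.Icc 0 1) (A S : Finset M) :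
    0 ≤ cubeWeight A S x :=
  prod_nonneg fun k _ => by
    split_ifs
    · exact hx.1 k
    · exact sub_nonneg.2 (hx.2 k)

lemma cubeWeight_update {A : Finset M} {j : M} (hj : j ∈ A) (S : Finset M) (x : M → ℝ) (c : ℝ) :
    cubeWeight A S (update x j c) = (if j ∈ S then c else 1 - c) * cubeWeight (A.erase j) S x := by
  rw [cubeWeight, ← mul_prod_erase A _ hj, update_self]
  congr 1
  refine prod_congr rfl fun k hk => ?_
  rw [update_of_ne (ne_of_mem_erase hk)]

lemma cubeWeight_erase_insert (A S : Finset M) (j : M) (x : M → ℝ) :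
    cubeWeight (A.erase j) (insert j S) x = cubeWeight (A.erase j) S x :=
  prod_congr rfl fun k hk => by simp only [mem_insert, ne_of_mem_erase hk, false_or]

lemma ite_one_mem_Icc (S : Finset M) {x : M → ℝ} (hx : x ∈ Set.Icc 0 1) :
    (fun k => if k ∈ S then 1 else x k) ∈ Set.Icc (0 : M → ℝ) 1 := by
  refine ⟨fun k => ?_, fun k => ?_⟩ <;> have := hx.1 k <;> have := hx.2 k <;>
    dsimp only <;> split_ifs <;> simp_all

def DiminishingReturns (g : Finset M → ℝ) : Prop :=
  ∀ j, Antitone fun S => g (insert j S) - g (S.erase j)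

variable [Fintype M]

noncomputable def multilinearExt (g : Finset M → ℝ) (x : M → ℝ) : ℝ :=
  ∑ S, g S * cubeWeight univ S x

/-- `multilinearExt g` is affine in each coordinate, so this is its partial derivative in `x j`. -/
noncomputable def mlPartial (g : Finset M → ℝ) (j : M) (x : M → ℝ) : ℝ :=
  multilinearExt g (update x j 1) - multilinearExt g (update x j 0)

lemma cubeWeight_indicator (S T : Finset M) :
    cubeWeight univ T (fun k => if k ∈ S then 1 else 0) = if T = S then 1 else 0 := by
  split_ifs with hTS
  · subst hTS
    exact prod_eq_one fun k _ => by split_ifs <;> simp_all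
  · obtain ⟨k, hk⟩ : ∃ k, ¬(k ∈ T ↔ k ∈ S) := by
      by_contra! h
      exact hTS (ext h)
    exact prod_eq_zero (mem_univ k) (by by_cases k ∈ T <;> simp_all)

lemma mlExt_eq_multilinearExt (v : Finset M → NNReal) (y : M → ℝ) :
    mlExt v y = multilinearExt (fun S => (v S : ℝ)) y := by
  refine sum_congr rfl fun S _ => ?_
  rw [cubeWeight, prod_ite, filter_mem_eq_inter, univ_inter, compl_eq_univ_sdiff, filter_not,
    filter_mem_eq_inter, univ_inter]

lemma multilinearExt_update (g : Finset M → ℝ) (x : M → ℝ) (j : M) (c : ℝ) :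
    multilinearExt g (update x j c) = ∑ S ∈ (univ.erase j).powerset,
      (c * g (insert j S) + (1 - c) * g S) * cubeWeight (univ.erase j) S x := by
  have huniv : (univ : Finset (Finset M)) = (insert j (univ.erase j)).powerset := by
    rw [insert_erase (mem_univ j), powerset_univ]
  rw [multilinearExt, huniv, sum_powerset_insert (notMem_erase j _), ← sum_add_distrib]
  refine sum_congr rfl fun S hS => ?_
  have hjS : j ∉ S := fun h => notMem_erase j _ (mem_powerset.1 hS h)
  simp only [cubeWeight_update (mem_univ j), cubeWeight_erase_insert, mem_insert_self, if_true,
    hjS, if_false]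
  ring

lemma multilinearExt_update_eq (g : Finset M → ℝ) (x : M → ℝ) (j : M) (c : ℝ) :
    multilinearExt g (update x j c) = multilinearExt g (update x j 0) + c * mlPartial g j x := by
  simp only [mlPartial, multilinearExt_update, mul_sum, ← sum_sub_distrib, ← sum_add_distrib]
  exact sum_congr rfl fun S _ => by ring

lemma multilinearExt_update_one (g : Finset M → ℝ) (x : M → ℝ) (j : M) :
    multilinearExt g (update x j 1) = multilinearExt g x + (1 - x j) * mlPartial g j x := by
  have hx := multilinearExt_update_eq g x j (x j)
  rw [update_eq_self] at hx
  rw [multilinearExt_update_eq, hx]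
  ring

lemma mlPartial_eq_multilinearExt (g : Finset M → ℝ) (j : M) (x : M → ℝ) :
    mlPartial g j x = multilinearExt (fun S => g (insert j S) - g (S.erase j)) x := by
  conv_rhs => rw [← update_eq_self j x, multilinearExt_update]
  simp only [mlPartial, multilinearExt_update, ← sum_sub_distrib]
  refine sum_congr rfl fun S hS => ?_
  have hjS : j ∉ S := fun h => notMem_erase j _ (mem_powerset.1 hS h)
  rw [erase_insert hjS, insert_idem, erase_eq_of_notMem hjS]
  ring

lemma multilinearExt_nonneg {g : Finset M → ℝ} (hg : ∀ S, 0 ≤ g S) {x : M → ℝ}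
    (hx : x ∈ Set.Icc 0 1) : 0 ≤ multilinearExt g x :=
  sum_nonneg fun S _ => mul_nonneg (hg S) (cubeWeight_nonneg hx _ _)

lemma multilinearExt_neg (g : Finset M → ℝ) (x : M → ℝ) :
    multilinearExt (fun S => -g S) x = -multilinearExt g x := by
  simp only [multilinearExt, neg_mul, sum_neg_distrib]

lemma multilinearExt_indicator (g : Finset M → ℝ) (S : Finset M) :
    multilinearExt g (fun k => if k ∈ S then 1 else 0) = g S := by
  simp only [multilinearExt, cubeWeight_indicator, mul_ite, mul_one, mul_zero, sum_ite_eq',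
    mem_univ, if_true]

lemma mlPartial_eq_sum (g : Finset M → ℝ) (j : M) (x : M → ℝ) :
    mlPartial g j x = ∑ S, g S * ((if j ∈ S then 1 else -1) * cubeWeight (univ.erase j) S x) := by
  simp only [mlPartial, multilinearExt, cubeWeight_update (mem_univ j), ← sum_sub_distrib]
  refine sum_congr rfl fun S _ => ?_
  split_ifs <;> ring

lemma hasDerivAt_multilinearExt_line (g : Finset M → ℝ) (x d : M → ℝ) (t : ℝ) :
    HasDerivAt (fun s => multilinearExt g (x + s • d))
      (∑ j, d j * mlPartial g j (x + t • d)) t := by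
  have hcoord : ∀ (S : Finset M) (k : M), HasDerivAt
      (fun s => if k ∈ S then (x + s • d) k else 1 - (x + s • d) k)
      (if k ∈ S then d k else -d k) t := by
    intro S k
    have hline : HasDerivAt (fun s => (x + s • d) k) (d k) t := by
      simpa using ((hasDerivAt_id t).mul_const (d k)).const_add (x k)
    split_ifs
    · exact hline
    · exact hline.const_sub 1
  have hsum := HasDerivAt.fun_sum fun S (_ : S ∈ univ) =>
    (HasDerivAt.fun_finsetProd fun k (_ : k ∈ univ) => hcoord S k).const_mul (g S)
  refine hsum.congr_deriv ?_
  simp only [mlPartial_eq_sum, mul_sum, cubeWeight, smul_eq_mul]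
  rw [sum_comm]
  refine sum_congr rfl fun S _ => sum_congr rfl fun j _ => ?_
  split_ifs <;> ring

variable {g : Finset M → ℝ}

lemma mlPartial_nonneg (hg : Monotone g) (j : M) {x : M → ℝ} (hx : x ∈ Set.Icc 0 1) :
    0 ≤ mlPartial g j x := by
  rw [mlPartial_eq_multilinearExt]
  exact multilinearExt_nonneg
    (fun S => sub_nonneg.2 (hg ((erase_subset j S).trans (subset_insert j S)))) hx

lemma multilinearExt_monotoneOn (hg : Monotone g) :
    MonotoneOn (multilinearExt g) (Set.Icc 0 1) := by
  intro x hx z hz hxz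
  simpa using le_of_hasDerivAt_of_nonneg zero_le_one
    (hasDerivAt_multilinearExt_line g x (z - x)) fun t ht =>
      sum_nonneg fun j _ => mul_nonneg (sub_nonneg.2 (hxz j)) (mlPartial_nonneg hg j
        ((convex_Icc 0 1).add_smul_sub_mem hx hz (Set.Ioo_subset_Icc_self ht)))

lemma mlPartial_antitoneOn (j : M) (hg : Antitone fun S => g (insert j S) - g (S.erase j)) :
    AntitoneOn (mlPartial g j) (Set.Icc 0 1) := by
  intro x hx z hz hxz
  have hneg := multilinearExt_monotoneOn (fun S T hST => neg_le_neg (hg hST)) hx hz hxz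
  simp only [multilinearExt_neg] at hneg
  rw [mlPartial_eq_multilinearExt, mlPartial_eq_multilinearExt]
  exact neg_le_neg_iff.1 hneg

lemma multilinearExt_ite_one_le (hdim : DiminishingReturns g)
    {x : M → ℝ} (hx : x ∈ Set.Icc 0 1) (S : Finset M) :
    multilinearExt g (fun k => if k ∈ S then 1 else x k)
      ≤ multilinearExt g x + ∑ j ∈ S, (1 - x j) * mlPartial g j x := by
  induction S using Finset.induction_on with
  | empty => simp
  | insert j S hj ih =>
    set z : M → ℝ := fun k => if k ∈ S then 1 else x k
    have hxz : x ≤ z := fun k => by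
      have h1 : x k ≤ 1 := hx.2 k
      by_cases hk : k ∈ S <;> simp [z, hk, h1]
    have hinsert : (fun k => if k ∈ insert j S then 1 else x k) = update z j 1 := by
      ext k
      by_cases hk : k = j <;> simp [z, hk]
    have hzj : z j = x j := if_neg hj
    calc multilinearExt g (fun k => if k ∈ insert j S then 1 else x k)
        = multilinearExt g z + (1 - x j) * mlPartial g j z := by
          rw [hinsert, multilinearExt_update_one, hzj]
      _ ≤ multilinearExt g x + ∑ i ∈ S, (1 - x i) * mlPartial g i x
            + (1 - x j) * mlPartial g j x :=
          add_le_add ih (mul_le_mul_of_nonneg_left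
            (mlPartial_antitoneOn j (hdim j) hx (ite_one_mem_Icc S hx) hxz) (sub_nonneg.2 (hx.2 j)))
      _ = multilinearExt g x + ∑ i ∈ insert j S, (1 - x i) * mlPartial g i x := by
          rw [sum_insert hj]
          ring

lemma le_multilinearExt_add_sum_mlPartial (hg : Monotone g)
    (hdim : DiminishingReturns g)
    {x : M → ℝ} (hx : x ∈ Set.Icc 0 1) (S : Finset M) :
    g S ≤ multilinearExt g x + ∑ j ∈ S, mlPartial g j x := by
  have hind : (fun k => if k ∈ S then (1 : ℝ) else 0) ≤ fun k => if k ∈ S then 1 else x k :=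
    fun k => by
      have h0 : 0 ≤ x k := hx.1 k
      by_cases hk : k ∈ S <;> simp [hk, h0]
  calc g S = multilinearExt g (fun k => if k ∈ S then 1 else 0) :=
        (multilinearExt_indicator g S).symm
    _ ≤ multilinearExt g (fun k => if k ∈ S then 1 else x k) :=
        multilinearExt_monotoneOn hg (ite_one_mem_Icc S (Set.left_mem_Icc.2 zero_le_one))
          (ite_one_mem_Icc S hx) hind
    _ ≤ multilinearExt g x + ∑ j ∈ S, (1 - x j) * mlPartial g j x :=
        multilinearExt_ite_one_le hdim hx S
    _ ≤ multilinearExt g x + ∑ j ∈ S, mlPartial g j x :=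
        add_le_add le_rfl (sum_le_sum fun j _ =>
          mul_le_of_le_one_left (mlPartial_nonneg hg j hx) (sub_le_self 1 (hx.1 j)))

lemma sum_mul_le_multilinearExt_add (hg : Monotone g)
    (hdim : DiminishingReturns g)
    {x : M → ℝ} (hx : x ∈ Set.Icc 0 1) {y : M → ℝ} {lam : Finset M → ℝ}
    (hlam0 : ∀ S, 0 ≤ lam S) (hlam1 : ∑ S, lam S = 1)
    (hlamy : ∀ j, ∑ S, lam S * (if j ∈ S then 1 else 0) = y j) :
    ∑ S, lam S * g S ≤ multilinearExt g x + ∑ j, y j * mlPartial g j x := by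
  calc ∑ S, lam S * g S ≤ ∑ S, lam S * (multilinearExt g x + ∑ j ∈ S, mlPartial g j x) :=
        sum_le_sum fun S _ => mul_le_mul_of_nonneg_left
          (le_multilinearExt_add_sum_mlPartial hg hdim hx S) (hlam0 S)
    _ = multilinearExt g x + ∑ j, y j * mlPartial g j x := by
        simp only [← hlamy, mul_add, sum_add_distrib, ← sum_mul, hlam1, one_mul, mul_sum]
        congr 1
        simp only [sum_mul, mul_ite, mul_one, mul_zero, ite_mul, zero_mul]
        rw [sum_comm]
        exact sum_congr rfl fun S _ => by rw [sum_ite_mem, univ_inter]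

lemma one_sub_inv_exp_mul_sum_le_multilinearExt (hg : Monotone g)
    (hdim : DiminishingReturns g) (hempty : g ∅ = 0)
    {y : M → ℝ} (hy : y ∈ Set.Icc 0 1) {lam : Finset M → ℝ}
    (hlam0 : ∀ S, 0 ≤ lam S) (hlam1 : ∑ S, lam S = 1)
    (hlamy : ∀ j, ∑ S, lam S * (if j ∈ S then 1 else 0) = y j) :
    (1 - 1 / Real.exp 1) * ∑ S, lam S * g S ≤ multilinearExt g y := by
  have hzero : multilinearExt g 0 = 0 := by
    have h := (multilinearExt_indicator g ∅).trans hempty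
    simp only [notMem_empty, if_false] at h
    exact h
  have hray := add_div_exp_le_of_sub_le_deriv (hasDerivAt_multilinearExt_line g 0 y)
    fun t ht => by
      have hty : 0 + t • y ∈ Set.Icc 0 1 := by
        rw [zero_add]
        exact (convex_Icc 0 1).smul_mem_of_zero_mem (Set.left_mem_Icc.2 zero_le_one) hy
          (Set.Ioo_subset_Icc_self ht)
      exact sub_le_iff_le_add'.2 (sum_mul_le_multilinearExt_add hg hdim hty hlam0 hlam1 hlamy)
  simp only [zero_smul, one_smul, add_zero, zero_add, hzero] at hray
  linarith [show (1 - 1 / Real.exp 1) * ∑ S, lam S * g S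
    = ∑ S, lam S * g S + (0 - ∑ S, lam S * g S) / Real.exp 1 by ring]

end MultilinearExtension

lemma IsSubmodular.diminishingReturns {M : Type*} [DecidableEq M] {v : Finset M → NNReal}
    (hv : IsSubmodular v) : DiminishingReturns fun S => (v S : ℝ) := by
  intro j S T hST
  have hunion : insert j S ∪ T.erase j = insert j T := by
    ext k
    by_cases hk : k = j <;> simp [hk]
    exact fun h => hST h
  have hinter : insert j S ∩ T.erase j = S.erase j := by
    ext k
    by_cases hk : k = j <;> simp [hk]
    exact fun h => hST h
  have h := NNReal.coe_le_coe.2 (hv (insert j S) (T.erase j))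
  rw [hunion, hinter] at h
  push_cast at h
  simp only
  linarith

/-- the multilinear extension is at least a `(1 - 1/e)` fraction of the
concave closure. -/
theorem stmt9 {M : Type*} [Fintype M] [DecidableEq M]
    (v : Finset M → NNReal)
    (hmono : IsMonotoneVal v) (hsub : IsSubmodular v) (hnorm : IsNormalized v)
    (y : M → ℝ) (hy : ∀ j, 0 ≤ y j ∧ y j ≤ 1) :
    (1 - 1 / Real.exp 1) * concaveClosure v y ≤ mlExt v y := by
  have hy' : y ∈ Set.Icc 0 1 := ⟨fun j => (hy j).1, fun j => (hy j).2⟩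
  have hg : Monotone fun S => (v S : ℝ) := fun A B h => NNReal.coe_le_coe.2 (hmono A B h)
  have hc : 0 < 1 - 1 / Real.exp 1 :=
    sub_pos.2 ((div_lt_one (Real.exp_pos 1)).2 (Real.one_lt_exp_iff.2 one_pos))
  rw [concaveClosure, mlExt_eq_multilinearExt, ← le_div_iff₀' hc]
  refine Real.sSup_le ?_ (div_nonneg (multilinearExt_nonneg (fun S => (v S).coe_nonneg) hy') hc.le)
  rintro _ ⟨lam, hlam0, hlam1, hmarg, rfl⟩
  rw [le_div_iff₀' hc]
  exact one_sub_inv_exp_mul_sum_le_multilinearExt hg hsub.diminishingReturns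
    (NNReal.coe_eq_zero.2 hnorm) hy' hlam0 hlam1 hmarg
end

section
/- Let v : 2^M → ℝ≥0 be a monotone, submodular, normalized valuation with multilinear extension V, let n ≥ 1, and let MMS denote the maximin share value of v over n parts, i.e., MMS = max over partitions (P_1,…,P_n) of M of min_k v(P_k). Then V(u) ≥ (1 − 1/e) · MMS, where u ∈ [0,1]^M is the vector with u_j = 1/n for every item j. -/
open Finset

/-!
Let `g(s) = F(s, …, s)` and let `P₁, …, Pₙ` be a partition with `v(Pₖ) ≥ μ := MMS` for all `k`.
Since `g'(s) = Σ_S Σ_{j ∉ S} (v(S + j) - v(S)) s^|S| (1-s)^(|Sᶜ|-1)`, submodularity applied to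
each `S ∪ Pₖ` and summed over `k` gives `n (μ - v(S)) ≤ Σ_{j ∉ S} (v(S + j) - v(S))`, whence
`n (μ - g(s)) ≤ (1 - s) g'(s) ≤ g'(s)` on `[0, 1]`. So `e^{ns} (g(s) - μ)` is nondecreasing, and
comparing `s = 0` with `s = 1/n` yields `e (g(1/n) - μ) ≥ g(0) - μ ≥ -μ`.
-/

open Set Real

lemma sum_sum_mem_eq_sum_sum_compl_insert {M : Type*} [Fintype M] [DecidableEq M]
    (F : Finset M → M → ℝ) :
    ∑ T : Finset M, ∑ j ∈ T, F T j = ∑ S : Finset M, ∑ j ∈ Sᶜ, F (insert j S) j := by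
  rw [Finset.sum_sigma', Finset.sum_sigma']
  refine Finset.sum_nbij' (fun p => ⟨p.1.erase p.2, p.2⟩) (fun p => ⟨insert p.2 p.1, p.2⟩)
    ?_ ?_ ?_ ?_ ?_ <;> rintro ⟨T, j⟩ h <;> simp_all [Finset.insert_erase]

lemma sum_sum_mem_of_existsUnique {N M : Type*} [Fintype N] [Fintype M] {P : N → Finset M}
    (hP : ∀ j, ∃! k, j ∈ P k) (f : M → ℝ) :
    ∑ k, ∑ j ∈ P k, f j = ∑ j, f j := by
  classical
  calc ∑ k, ∑ j ∈ P k, f j = ∑ j, ∑ k, if j ∈ P k then f j else 0 := by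
        rw [Finset.sum_comm]
        exact Finset.sum_congr rfl fun k _ => by rw [Finset.sum_ite_mem, Finset.univ_inter]
    _ = ∑ j, f j := by
        refine Finset.sum_congr rfl fun j _ => ?_
        obtain ⟨k, hk, huniq⟩ := hP j
        rw [Finset.sum_eq_single k (fun k' _ hk' => if_neg fun h => hk' (huniq k' h))
          (by simp), if_pos hk]

lemma hasDerivAt_pow_mul_one_sub_pow (a b : ℕ) (s : ℝ) :
    HasDerivAt (fun x : ℝ => x ^ a * (1 - x) ^ b)
      (a * s ^ (a - 1) * (1 - s) ^ b - b * s ^ a * (1 - s) ^ (b - 1)) s :=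
  ((hasDerivAt_pow a s).fun_mul (((hasDerivAt_id' s).const_sub 1).fun_pow b)).congr_deriv (by ring)

lemma sub_le_exp_mul_sub_of_le_deriv {g g' : ℝ → ℝ} {c μ t : ℝ} (ht : 0 ≤ t)
    (hg : ∀ s, HasDerivAt g (g' s) s) (hg' : ∀ s ∈ Ioo 0 t, c * (μ - g s) ≤ g' s) :
    g 0 - μ ≤ exp (c * t) * (g t - μ) := by
  set φ : ℝ → ℝ := fun s => exp (c * s) * (g s - μ)
  have hφ : ∀ s, HasDerivAt φ (exp (c * s) * (c * (g s - μ) + g' s)) s := fun s =>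
    ((((hasDerivAt_id' s).const_mul c).exp).fun_mul ((hg s).sub_const μ)).congr_deriv (by ring)
  have hmono : MonotoneOn φ (Icc 0 t) := by
    refine monotoneOn_of_hasDerivWithinAt_nonneg (convex_Icc 0 t)
      (fun s _ => (hφ s).continuousAt.continuousWithinAt) (fun s _ => (hφ s).hasDerivWithinAt)
      fun s hs => ?_
    rw [interior_Icc] at hs
    have := hg' s hs
    have : 0 ≤ c * (g s - μ) + g' s := by linarith
    positivity
  simpa [φ] using hmono (left_mem_Icc.2 ht) (right_mem_Icc.2 ht) ht

lemma sub_le_sum_marginal {M : Type*} [DecidableEq M] {v : Finset M → NNReal}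
    (hsub : IsSubmodular v) (S T : Finset M) :
    (v (S ∪ T) : ℝ) - v S ≤ ∑ j ∈ T, ((v (insert j S) : ℝ) - v S) := by
  induction T using Finset.induction_on with
  | empty => simp
  | @insert a T ha ih =>
    have hunion : (S ∪ T) ∪ insert a S = S ∪ insert a T := by
      ext x; simp only [Finset.mem_union, Finset.mem_insert]; tauto
    have hinter : (S ∪ T) ∩ insert a S = S := by
      ext x; simp only [Finset.mem_inter, Finset.mem_union, Finset.mem_insert]; grind
    have h := hsub (S ∪ T) (insert a S)
    rw [hunion, hinter, ← NNReal.coe_le_coe] at h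
    push_cast at h
    rw [Finset.sum_insert ha]
    linarith

section Valuation

variable {M : Type*} [Fintype M] [DecidableEq M] (v : Finset M → NNReal)

lemma mul_sub_le_sum_marginal_of_partition (hmono : IsMonotoneVal v) (hsub : IsSubmodular v) {n : ℕ}
    {P : Fin n → Finset M} (hP : ∀ j, ∃! k, j ∈ P k) {μ : ℝ} (hμ : ∀ k, μ ≤ v (P k))
    (S : Finset M) :
    n * (μ - v S) ≤ ∑ j ∈ Sᶜ, ((v (insert j S) : ℝ) - v S) := by
  calc n * (μ - v S) = ∑ _k : Fin n, (μ - v S) := by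
        rw [Finset.sum_const, Finset.card_univ, Fintype.card_fin, nsmul_eq_mul]
    _ ≤ ∑ k, ∑ j ∈ P k, ((v (insert j S) : ℝ) - v S) := by
        refine Finset.sum_le_sum fun k _ => le_trans ?_ (sub_le_sum_marginal hsub S (P k))
        have : (v (P k) : ℝ) ≤ v (S ∪ P k) := hmono _ _ Finset.subset_union_right
        linarith [hμ k]
    _ = ∑ j, ((v (insert j S) : ℝ) - v S) := sum_sum_mem_of_existsUnique hP _
    _ = ∑ j ∈ Sᶜ, ((v (insert j S) : ℝ) - v S) := by
        refine (Finset.sum_subset (Finset.subset_univ _) fun j _ hj => ?_).symm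
        rw [Finset.notMem_compl.1 hj |> Finset.insert_eq_of_mem, sub_self]

noncomputable def mlExtDiag (s : ℝ) : ℝ :=
  ∑ S : Finset M, (v S : ℝ) * (s ^ #S * (1 - s) ^ #Sᶜ)

noncomputable def mlExtDiagDeriv (s : ℝ) : ℝ :=
  ∑ S : Finset M, (∑ j ∈ Sᶜ, ((v (insert j S) : ℝ) - v S)) * (s ^ #S * (1 - s) ^ (#Sᶜ - 1))

lemma mlExt_const (s : ℝ) : mlExt v (fun _ => s) = mlExtDiag v s := by
  simp only [mlExt, mlExtDiag, Finset.prod_const]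

lemma mlExtDiag_zero_nonneg : 0 ≤ mlExtDiag v 0 := by
  unfold mlExtDiag
  positivity

lemma hasDerivAt_mlExtDiag (s : ℝ) : HasDerivAt (mlExtDiag v) (mlExtDiagDeriv v s) s := by
  have hgain : ∑ S : Finset M, (v S : ℝ) * (#S * s ^ (#S - 1) * (1 - s) ^ #Sᶜ)
      = ∑ S : Finset M, ∑ j ∈ Sᶜ, (v (insert j S) : ℝ) * (s ^ #S * (1 - s) ^ (#Sᶜ - 1)) := by
    have hcard : ∀ S : Finset M, ∀ j ∈ Sᶜ, s ^ #S * (1 - s) ^ (#Sᶜ - 1)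
        = s ^ (#(insert j S) - 1) * (1 - s) ^ #(insert j S)ᶜ := fun S j hj => by
      rw [Finset.card_insert_of_notMem (Finset.mem_compl.1 hj), Nat.add_sub_cancel,
        Finset.compl_insert, Finset.card_erase_of_mem hj]
    calc ∑ S : Finset M, (v S : ℝ) * (#S * s ^ (#S - 1) * (1 - s) ^ #Sᶜ)
        = ∑ T : Finset M, ∑ _j ∈ T, (v T : ℝ) * (s ^ (#T - 1) * (1 - s) ^ #Tᶜ) := by
          simp only [Finset.sum_const, nsmul_eq_mul]
          exact Finset.sum_congr rfl fun S _ => by ring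
      _ = ∑ S : Finset M, ∑ j ∈ Sᶜ,
            (v (insert j S) : ℝ) * (s ^ (#(insert j S) - 1) * (1 - s) ^ #(insert j S)ᶜ) :=
          sum_sum_mem_eq_sum_sum_compl_insert fun T _ => (v T : ℝ) * _
      _ = _ := Finset.sum_congr rfl fun S _ => Finset.sum_congr rfl fun j hj => by
          rw [hcard S j hj]
  have hloss : ∑ S : Finset M, (v S : ℝ) * (#Sᶜ * s ^ #S * (1 - s) ^ (#Sᶜ - 1))
      = ∑ S : Finset M, ∑ j ∈ Sᶜ, (v S : ℝ) * (s ^ #S * (1 - s) ^ (#Sᶜ - 1)) := by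
    simp only [Finset.sum_const, nsmul_eq_mul]
    exact Finset.sum_congr rfl fun S _ => by ring
  refine (HasDerivAt.fun_sum fun S _ =>
    (hasDerivAt_pow_mul_one_sub_pow #S #Sᶜ s).const_mul (v S : ℝ)).congr_deriv ?_
  rw [mlExtDiagDeriv]
  simp only [mul_sub, Finset.sum_sub_distrib, sub_mul, Finset.sum_mul]
  rw [hgain, hloss]

lemma one_sub_mul_mlExtDiagDeriv (s : ℝ) :
    (1 - s) * mlExtDiagDeriv v s
      = ∑ S : Finset M, (∑ j ∈ Sᶜ, ((v (insert j S) : ℝ) - v S)) * (s ^ #S * (1 - s) ^ #Sᶜ) := by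
  rw [mlExtDiagDeriv, Finset.mul_sum]
  refine Finset.sum_congr rfl fun S _ => ?_
  rcases (#Sᶜ).eq_zero_or_pos with hS | hS
  · simp [Finset.card_eq_zero.1 hS]
  · rw [← Nat.sub_add_cancel hS, pow_succ, Nat.add_sub_cancel]
    ring

lemma mlExtDiagDeriv_nonneg (hmono : IsMonotoneVal v) {s : ℝ} (h0 : 0 ≤ s) (h1 : s ≤ 1) :
    0 ≤ mlExtDiagDeriv v s := by
  have h1' : 0 ≤ 1 - s := by linarith
  refine Finset.sum_nonneg fun S _ => mul_nonneg (Finset.sum_nonneg fun j _ => ?_) (by positivity)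
  exact sub_nonneg.2 (NNReal.coe_le_coe.2 (hmono _ _ (Finset.subset_insert _ _)))

lemma mul_sub_mlExtDiag_le_deriv_of_partition (hmono : IsMonotoneVal v) (hsub : IsSubmodular v) {n : ℕ}
    {P : Fin n → Finset M} (hP : ∀ j, ∃! k, j ∈ P k) {μ : ℝ} (hμ : ∀ k, μ ≤ v (P k))
    {s : ℝ} (h0 : 0 ≤ s) (h1 : s ≤ 1) :
    n * (μ - mlExtDiag v s) ≤ mlExtDiagDeriv v s := by
  have h1' : 0 ≤ 1 - s := by linarith
  have hweights : ∑ S : Finset M, s ^ #S * (1 - s) ^ #Sᶜ = 1 := by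
    simpa [← Finset.compl_eq_univ_sdiff] using (Finset.prod_add (fun _ : M => s)
      (fun _ => 1 - s) Finset.univ).symm
  calc n * (μ - mlExtDiag v s)
      = n * (μ * ∑ S : Finset M, s ^ #S * (1 - s) ^ #Sᶜ - mlExtDiag v s) := by
        rw [hweights, mul_one]
    _ = ∑ S : Finset M, n * (μ - v S) * (s ^ #S * (1 - s) ^ #Sᶜ) := by
        rw [mlExtDiag, Finset.mul_sum, ← Finset.sum_sub_distrib, Finset.mul_sum]
        exact Finset.sum_congr rfl fun S _ => by ring
    _ ≤ (1 - s) * mlExtDiagDeriv v s := by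
        rw [one_sub_mul_mlExtDiagDeriv]
        exact Finset.sum_le_sum fun S _ => mul_le_mul_of_nonneg_right
          (mul_sub_le_sum_marginal_of_partition v hmono hsub hP hμ S) (by positivity)
    _ ≤ mlExtDiagDeriv v s := by
        have := mlExtDiagDeriv_nonneg v hmono h0 h1
        nlinarith

end Valuation

lemma exists_partition_mmsValue_le {M : Type*} [Fintype M] (v : Finset M → NNReal) {n : ℕ}
    (hn : 1 ≤ n) :
    ∃ P : Fin n → Finset M, (∀ j, ∃! k, j ∈ P k) ∧ ∀ k, mmsValue n v ≤ v (P k) := by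
  set R : Set ℝ := {r | ∃ P : Fin n → Finset M, (∀ j, ∃! k, j ∈ P k) ∧ r = ⨅ k, (v (P k) : ℝ)}
  have hne : R.Nonempty := by
    let k₀ : Fin n := ⟨0, hn⟩
    refine ⟨_, fun k => if k = k₀ then Finset.univ else ∅, fun j => ⟨k₀, by simp, ?_⟩, rfl⟩
    intro k hk
    by_contra h
    simp [h] at hk
  have hfin : R.Finite := (Set.finite_range fun P : Fin n → Finset M => ⨅ k, (v (P k) : ℝ)).subset
    fun r ⟨P, _, hr⟩ => ⟨P, hr.symm⟩
  obtain ⟨P, hP, hval⟩ : mmsValue n v ∈ R := hne.csSup_mem hfin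
  exact ⟨P, hP, fun k => hval.trans_le (ciInf_le (Finite.bddBelow_range _) k)⟩

theorem stmt13_general {M : Type*} [Fintype M] [DecidableEq M]
    (v : Finset M → NNReal)
    (hmono : IsMonotoneVal v) (hsub : IsSubmodular v)
    (n : ℕ) (hn : 1 ≤ n) :
    (1 - 1 / Real.exp 1) * mmsValue n v ≤ mlExt v (fun _ => 1 / (n : ℝ)) := by
  obtain ⟨P, hP, hμ⟩ := exists_partition_mmsValue_le v hn
  have hn' : (0 : ℝ) < n := by exact_mod_cast hn
  have hstep : 1 / (n : ℝ) ≤ 1 := (div_le_one hn').2 (by exact_mod_cast hn)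
  have hgronwall := sub_le_exp_mul_sub_of_le_deriv (by positivity) (hasDerivAt_mlExtDiag v)
    fun s hs => mul_sub_mlExtDiag_le_deriv_of_partition v hmono hsub hP hμ hs.1.le (hs.2.le.trans hstep)
  rw [mul_one_div_cancel hn'.ne'] at hgronwall
  have h0 := mlExtDiag_zero_nonneg v
  rw [mlExt_const, one_sub_div (exp_pos 1).ne', div_mul_eq_mul_div, div_le_iff₀ (exp_pos 1)]
  linarith

/-- the multilinear extension at the uniform `1/n` point is at least a
`(1 - 1/e)` fraction of the maximin share over `n` parts. -/
theorem stmt13 {M : Type*} [Fintype M] [DecidableEq M]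
    (v : Finset M → NNReal)
    (hmono : IsMonotoneVal v) (hsub : IsSubmodular v) (hnorm : IsNormalized v)
    (n : ℕ) (hn : 1 ≤ n) :
    (1 - 1 / Real.exp 1) * mmsValue n v ≤ mlExt v (fun _ => 1 / (n : ℝ)) :=
  stmt13_general v hmono hsub n hn
end
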